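/- arXiv:2401.02511 — 8 statements merged into one kernel-verified Lean document; each statement's English description precedes it below -/
import Mathlib

section
/- Let β₁, β₂ : [0,1] → ℝ be continuous with ‖β₁‖_∞, ‖β₂‖_∞ ≤ B, and let k₁, k₂ be the corresponding solutions of the Volterra equations kᵢ(x) = -βᵢ(x) + ∫₀ˣ βᵢ(x-y) kᵢ(y) dy. Then ‖k₁ - k₂‖_∞ ≤ e^{3B} ‖β₁ - β₂‖_∞. -/
open intervalIntegral Real Set MeasureTheory

lemma gron_aux (B C : ℝ) (hB : 0 < B) (hC : 0 ≤ C) (g : ℝ → ℝ)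
    (hg : ContinuousOn g (Icc 0 1))
    (h : ∀ x ∈ Icc (0:ℝ) 1, |g x| ≤ C + B * ∫ y in (0:ℝ)..x, |g y|) :
    ∀ x ∈ Icc (0:ℝ) 1, |g x| ≤ C * Real.exp (B * x) := by
  set e : ℝ → ℝ := fun y => |IccExtend zero_le_one ((Icc (0:ℝ) 1).restrict g) y| with he
  have hec : Continuous e :=
    (continuous_IccExtend_iff.2 (continuousOn_iff_continuous_restrict.1 hg)).abs
  have heg : ∀ y ∈ Icc (0:ℝ) 1, e y = |g y| := by
    intro y hy
    simp [he, IccExtend_of_mem _ _ hy]; rfl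
  set f : ℝ → ℝ := fun x => ∫ y in (0:ℝ)..x, e y with hf
  have hfd : ∀ t : ℝ, HasDerivAt f (e t) t := fun t =>
    intervalIntegral.integral_hasDerivAt_right (hec.intervalIntegrable 0 t)
      (hec.stronglyMeasurableAtFilter _ _) hec.continuousAt
  have hfe : ∀ x ∈ Icc (0:ℝ) 1, f x = ∫ y in (0:ℝ)..x, |g y| := by
    intro x hx
    apply intervalIntegral.integral_congr
    intro y hy
    rw [uIcc_of_le hx.1] at hy
    exact heg y ⟨hy.1, hy.2.trans hx.2⟩
  have hfnn : ∀ x ∈ Icc (0:ℝ) 1, 0 ≤ f x := fun x hx =>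
    intervalIntegral.integral_nonneg hx.1 (fun y _ => abs_nonneg _)
  have key := norm_le_gronwallBound_of_norm_deriv_right_le (f := f) (f' := e)
    (δ := 0) (K := B) (ε := C) (a := 0) (b := 1)
    (fun t _ => (hfd t).continuousAt.continuousWithinAt)
    (fun t _ => (hfd t).hasDerivWithinAt)
    (by simp [hf])
    (by
      intro t ht
      have ht' : t ∈ Icc (0:ℝ) 1 := ⟨ht.1, ht.2.le⟩
      rw [Real.norm_eq_abs, Real.norm_eq_abs, abs_of_nonneg (hfnn t ht'), abs_abs]
      show e t ≤ B * f t + C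
      rw [heg t ht']
      have := h t ht'
      rw [← hfe t ht'] at this
      linarith)
  intro x hx
  have hkey := key x hx
  rw [Real.norm_eq_abs, abs_of_nonneg (hfnn x hx)] at hkey
  simp only [gronwallBound_of_K_ne_0 hB.ne', sub_zero, zero_mul, zero_add] at hkey
  have h2 := h x hx
  rw [← hfe x hx] at h2
  have hBne : B ≠ 0 := hB.ne'
  have h3 : B * f x ≤ B * (C / B * (Real.exp (B * x) - 1)) :=
    mul_le_mul_of_nonneg_left hkey hB.le
  have h4 : B * (C / B * (Real.exp (B * x) - 1)) = C * (Real.exp (B * x) - 1) := by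
    field_simp
  nlinarith [h2, h3, h4]

theorem stmt_3 (B : ℝ) (hB : 0 < B) (β₁ β₂ k₁ k₂ : ℝ → ℝ)
    (hβ₁c : ContinuousOn β₁ (Icc 0 1)) (hβ₂c : ContinuousOn β₂ (Icc 0 1))
    (hβ₁B : ∀ x ∈ Icc (0:ℝ) 1, |β₁ x| ≤ B)
    (hβ₂B : ∀ x ∈ Icc (0:ℝ) 1, |β₂ x| ≤ B)
    (hk₁c : ContinuousOn k₁ (Icc 0 1)) (hk₂c : ContinuousOn k₂ (Icc 0 1))
    (hk₁ : ∀ x ∈ Icc (0:ℝ) 1, k₁ x = -β₁ x + ∫ y in (0:ℝ)..x, β₁ (x - y) * k₁ y)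
    (hk₂ : ∀ x ∈ Icc (0:ℝ) 1, k₂ x = -β₂ x + ∫ y in (0:ℝ)..x, β₂ (x - y) * k₂ y)
    (D : ℝ) (hD : ∀ x ∈ Icc (0:ℝ) 1, |β₁ x - β₂ x| ≤ D) :
    ∀ x ∈ Icc (0:ℝ) 1, |k₁ x - k₂ x| ≤ Real.exp (3 * B) * D := by
  -- maps-to facts and continuity of the convolution integrands
  have hmaps : ∀ x ∈ Icc (0:ℝ) 1, MapsTo (fun y => x - y) (Icc 0 x) (Icc (0:ℝ) 1) := by
    intro x hx y hy
    obtain ⟨hy1, hy2⟩ := hy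
    obtain ⟨hx1, hx2⟩ := hx
    simp only [mem_Icc]
    constructor <;> linarith
  have hcont : ∀ (β k : ℝ → ℝ), ContinuousOn β (Icc 0 1) → ContinuousOn k (Icc 0 1) →
      ∀ x ∈ Icc (0:ℝ) 1, ContinuousOn (fun y => β (x - y) * k y) (Icc 0 x) := by
    intro β k hβ hk x hx
    exact ((hβ.comp ((continuous_const.sub continuous_id).continuousOn) (hmaps x hx)).mul
      (hk.mono (Icc_subset_Icc le_rfl hx.2)))
  have hint : ∀ (β k : ℝ → ℝ), ContinuousOn β (Icc 0 1) → ContinuousOn k (Icc 0 1) →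
      ∀ x ∈ Icc (0:ℝ) 1, IntervalIntegrable (fun y => β (x - y) * k y) volume 0 x := by
    intro β k hβ hk x hx
    apply ContinuousOn.intervalIntegrable
    rw [uIcc_of_le hx.1]
    exact hcont β k hβ hk x hx
  -- Step 1: bound on k₂
  have hk₂B : ∀ x ∈ Icc (0:ℝ) 1, |k₂ x| ≤ B * Real.exp B := by
    have step : ∀ x ∈ Icc (0:ℝ) 1, |k₂ x| ≤ B + B * ∫ y in (0:ℝ)..x, |k₂ y| := by
      intro x hx
      rw [hk₂ x hx]
      have h1 : |∫ y in (0:ℝ)..x, β₂ (x - y) * k₂ y| ≤ B * ∫ y in (0:ℝ)..x, |k₂ y| := by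
        calc |∫ y in (0:ℝ)..x, β₂ (x - y) * k₂ y|
            ≤ ∫ y in (0:ℝ)..x, |β₂ (x - y) * k₂ y| :=
              intervalIntegral.abs_integral_le_integral_abs hx.1
          _ ≤ ∫ y in (0:ℝ)..x, B * |k₂ y| := by
              apply intervalIntegral.integral_mono_on hx.1
              · exact (hint β₂ k₂ hβ₂c hk₂c x hx).abs
              · apply ContinuousOn.intervalIntegrable
                rw [uIcc_of_le hx.1]
                exact continuousOn_const.mul (hk₂c.mono (Icc_subset_Icc le_rfl hx.2)).abs
              · intro y hy
                rw [abs_mul]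
                exact mul_le_mul_of_nonneg_right (hβ₂B _ (hmaps x hx hy)) (abs_nonneg _)
          _ = B * ∫ y in (0:ℝ)..x, |k₂ y| := intervalIntegral.integral_const_mul _ _
      calc |(-β₂ x + ∫ y in (0:ℝ)..x, β₂ (x - y) * k₂ y)|
          ≤ |β₂ x| + |∫ y in (0:ℝ)..x, β₂ (x - y) * k₂ y| := by
            rw [← abs_neg (β₂ x)] at *; exact abs_add_le _ _
        _ ≤ B + B * ∫ y in (0:ℝ)..x, |k₂ y| := add_le_add (hβ₂B x hx) h1
    intro x hx
    calc |k₂ x| ≤ B * Real.exp (B * x) := gron_aux B B hB hB.le k₂ hk₂c step x hx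
      _ ≤ B * Real.exp B := by
          apply mul_le_mul_of_nonneg_left _ hB.le
          apply Real.exp_le_exp.2
          nlinarith [hx.1, hx.2]
  have hD0 : 0 ≤ D := le_trans (abs_nonneg _) (hD 0 ⟨le_rfl, zero_le_one⟩)
  set C : ℝ := D * (1 + B * Real.exp B) with hCdef
  have hC0 : 0 ≤ C := by positivity
  -- Step 2: integral inequality for the difference
  have step2 : ∀ x ∈ Icc (0:ℝ) 1, |k₁ x - k₂ x| ≤ C + B * ∫ y in (0:ℝ)..x, |k₁ y - k₂ y| := by
    intro x hx
    have hI₁ := hint β₁ k₁ hβ₁c hk₁c x hx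
    have hI₂ := hint β₂ k₂ hβ₂c hk₂c x hx
    have heq : k₁ x - k₂ x = -(β₁ x - β₂ x) +
        ∫ y in (0:ℝ)..x, (β₁ (x - y) * k₁ y - β₂ (x - y) * k₂ y) := by
      rw [hk₁ x hx, hk₂ x hx, intervalIntegral.integral_sub hI₁ hI₂]
      ring
    have hpt : ∀ y ∈ Icc (0:ℝ) x, |β₁ (x - y) * k₁ y - β₂ (x - y) * k₂ y| ≤
        B * |k₁ y - k₂ y| + D * (B * Real.exp B) := by
      intro y hy
      have hy1 : y ∈ Icc (0:ℝ) 1 := ⟨hy.1, hy.2.trans hx.2⟩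
      have hxy := hmaps x hx hy
      have : β₁ (x - y) * k₁ y - β₂ (x - y) * k₂ y
          = β₁ (x - y) * (k₁ y - k₂ y) + (β₁ (x - y) - β₂ (x - y)) * k₂ y := by ring
      rw [this]
      calc |β₁ (x - y) * (k₁ y - k₂ y) + (β₁ (x - y) - β₂ (x - y)) * k₂ y|
          ≤ |β₁ (x - y) * (k₁ y - k₂ y)| + |(β₁ (x - y) - β₂ (x - y)) * k₂ y| := abs_add_le _ _
        _ ≤ B * |k₁ y - k₂ y| + D * (B * Real.exp B) := by
            rw [abs_mul, abs_mul]
            exact add_le_add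
              (mul_le_mul_of_nonneg_right (hβ₁B _ hxy) (abs_nonneg _))
              (mul_le_mul (hD _ hxy) (hk₂B y hy1) (abs_nonneg _) hD0)
    have h1 : |∫ y in (0:ℝ)..x, (β₁ (x - y) * k₁ y - β₂ (x - y) * k₂ y)| ≤
        (B * ∫ y in (0:ℝ)..x, |k₁ y - k₂ y|) + D * (B * Real.exp B) * x := by
      calc |∫ y in (0:ℝ)..x, (β₁ (x - y) * k₁ y - β₂ (x - y) * k₂ y)|
          ≤ ∫ y in (0:ℝ)..x, |β₁ (x - y) * k₁ y - β₂ (x - y) * k₂ y| :=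
            intervalIntegral.abs_integral_le_integral_abs hx.1
        _ ≤ ∫ y in (0:ℝ)..x, (B * |k₁ y - k₂ y| + D * (B * Real.exp B)) := by
            apply intervalIntegral.integral_mono_on hx.1
            · exact (hI₁.sub hI₂).abs
            · apply ContinuousOn.intervalIntegrable
              rw [uIcc_of_le hx.1]
              exact (continuousOn_const.mul
                ((hk₁c.sub hk₂c).mono (Icc_subset_Icc le_rfl hx.2)).abs).add continuousOn_const
            · exact hpt
        _ = (B * ∫ y in (0:ℝ)..x, |k₁ y - k₂ y|) + D * (B * Real.exp B) * x := by
            rw [intervalIntegral.integral_add, intervalIntegral.integral_const_mul,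
              intervalIntegral.integral_const, smul_eq_mul]
            · ring
            · apply ContinuousOn.intervalIntegrable
              rw [uIcc_of_le hx.1]
              exact continuousOn_const.mul
                ((hk₁c.sub hk₂c).mono (Icc_subset_Icc le_rfl hx.2)).abs
            · exact intervalIntegrable_const
    have hDx : D * (B * Real.exp B) * x ≤ D * (B * Real.exp B) := by
      have hM : 0 ≤ D * (B * Real.exp B) := by positivity
      nlinarith [mul_nonneg hM (sub_nonneg.2 hx.2)]
    calc |k₁ x - k₂ x| = |-(β₁ x - β₂ x) +
          ∫ y in (0:ℝ)..x, (β₁ (x - y) * k₁ y - β₂ (x - y) * k₂ y)| := by rw [heq]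
      _ ≤ |β₁ x - β₂ x| + |∫ y in (0:ℝ)..x, (β₁ (x - y) * k₁ y - β₂ (x - y) * k₂ y)| := by
          rw [← abs_neg (β₁ x - β₂ x)] at *; exact abs_add_le _ _
      _ ≤ D + ((B * ∫ y in (0:ℝ)..x, |k₁ y - k₂ y|) + D * (B * Real.exp B) * x) :=
          add_le_add (hD x hx) h1
      _ ≤ C + B * ∫ y in (0:ℝ)..x, |k₁ y - k₂ y| := by rw [hCdef]; linarith
  -- conclude
  intro x hx
  have := gron_aux B C hB hC0 (fun y => k₁ y - k₂ y) (hk₁c.sub hk₂c) step2 x hx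
  have hE := Real.add_one_le_exp B
  have hE1 : (1:ℝ) ≤ Real.exp B := by nlinarith [Real.exp_pos B]
  have h3B : Real.exp (3 * B) = Real.exp B * Real.exp B * Real.exp B := by
    rw [show (3:ℝ) * B = B + B + B by ring, Real.exp_add, Real.exp_add]
  have hex : Real.exp (B * x) ≤ Real.exp B := by
    apply Real.exp_le_exp.2; nlinarith [hx.1, hx.2]
  calc |k₁ x - k₂ x| ≤ C * Real.exp (B * x) := this
    _ ≤ C * Real.exp B := mul_le_mul_of_nonneg_left hex hC0
    _ ≤ Real.exp (3 * B) * D := by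
        rw [hCdef, h3B]
        have hEp := Real.exp_pos B
        have key2 : Real.exp B + B * (Real.exp B * Real.exp B) ≤
            Real.exp B * Real.exp B * Real.exp B := by
          have hEE : Real.exp B ≤ Real.exp B * Real.exp B := by nlinarith
          have h1 : (B + 1) * (Real.exp B * Real.exp B) ≤
              Real.exp B * (Real.exp B * Real.exp B) :=
            mul_le_mul_of_nonneg_right hE (by positivity)
          nlinarith
        nlinarith [mul_le_mul_of_nonneg_left key2 hD0]
end

section
/- Let β : [0,1] × [-B_ν, B_ν] → ℝ be C¹ with ‖β‖_∞ ≤ B_β and ‖β_x‖_∞ ≤ α_x, and let k(·,ν) solve k(x,ν) = -β(x,ν) + ∫₀ˣ β(x-y,ν) k(y,ν) dy for each ν. Define Δk⁰ = -β and Δk^{n+1}(x,ν) = ∫₀ˣ β(x-y,ν)Δkⁿ(y,ν)dy. Then the x-partial derivative satisfies |Δk^{n+1}_x(x,ν)| ≤ B_β^{n+2} xⁿ/n! + α_x B_β^{n+1} x^{n+1}/(n+1)! for all (x,ν) ∈ [0,1] × [-B_ν, B_ν]. -/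
open intervalIntegral Real Set

theorem stmt_4 (Bν Bβ αx : ℝ) (hBν : 0 < Bν) (hBβ : 0 < Bβ) (hαx : 0 < αx)
    (β : ℝ → ℝ → ℝ) (hβ : ContDiff ℝ 1 (Function.uncurry β))
    (hβB : ∀ x ∈ Icc (0:ℝ) 1, ∀ ν ∈ Icc (-Bν) Bν, |β x ν| ≤ Bβ)
    (hβx : ∀ x ∈ Icc (0:ℝ) 1, ∀ ν ∈ Icc (-Bν) Bν,
      |deriv (fun x' => β x' ν) x| ≤ αx)
    (Δk : ℕ → ℝ → ℝ → ℝ)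
    (h0 : ∀ x ν, Δk 0 x ν = -β x ν)
    (hrec : ∀ n x ν, Δk (n+1) x ν = ∫ y in (0:ℝ)..x, β (x - y) ν * Δk n y ν) :
    ∀ n : ℕ, ∀ x ∈ Icc (0:ℝ) 1, ∀ ν ∈ Icc (-Bν) Bν,
      |deriv (fun x' => Δk (n+1) x' ν) x| ≤
        Bβ ^ (n + 2) * x ^ n / (Nat.factorial n : ℝ)
          + αx * Bβ ^ (n + 1) * x ^ (n + 1) / (Nat.factorial (n + 1) : ℝ) := by
  intro n x hx ν hν
  obtain ⟨hx0, hx1⟩ := hx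
  -- basic continuity facts
  have hβν : ContDiff ℝ 1 (fun x' => β x' ν) :=
    hβ.comp (contDiff_id.prodMk contDiff_const)
  have hβνc : Continuous (fun x' => β x' ν) := hβν.continuous
  have hDc : Continuous (deriv (fun x' => β x' ν)) := hβν.continuous_deriv le_rfl
  -- continuity of Δk m (·, ν)
  have hcont : ∀ m, Continuous (fun x' => Δk m x' ν) := by
    intro m
    induction m with
    | zero =>
      have : (fun x' => Δk 0 x' ν) = fun x' => -β x' ν := funext fun x' => h0 x' ν
      rw [this]; exact hβνc.neg
    | succ m ih =>
      have : (fun x' => Δk (m+1) x' ν)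
          = fun x' => ∫ y in (0:ℝ)..x', β (x' - y) ν * Δk m y ν :=
        funext fun x' => hrec m x' ν
      rw [this]
      apply intervalIntegral.continuous_parametric_intervalIntegral_of_continuous
        (f := fun x' y => β (x' - y) ν * Δk m y ν) ?_ continuous_id
      exact (hβνc.comp (continuous_fst.sub continuous_snd)).mul (ih.comp continuous_snd)
  -- the basic bound on Δk m
  have hbound : ∀ m, ∀ t ∈ Icc (0:ℝ) 1,
      |Δk m t ν| ≤ Bβ ^ (m+1) * t ^ m / (Nat.factorial m : ℝ) := by
    intro m
    induction m with
    | zero =>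
      intro t ht
      have := hβB t ht ν hν
      simpa [h0] using this
    | succ m ih =>
      intro t ht
      have ht0 : (0:ℝ) ≤ t := ht.1
      rw [hrec]
      have hIoc : Set.uIoc (0:ℝ) t = Ioc 0 t := uIoc_of_le ht0
      have hfacpos : (0:ℝ) < (Nat.factorial m : ℝ) := by positivity
      have hptwise : ∀ᵐ y ∂(MeasureTheory.volume.restrict (Set.uIoc (0:ℝ) t)),
          ‖β (t - y) ν * Δk m y ν‖ ≤ (Bβ ^ (m+2) / (Nat.factorial m : ℝ)) * y ^ m := by
        rw [hIoc]
        refine (MeasureTheory.ae_restrict_iff' measurableSet_Ioc).2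
          (Filter.Eventually.of_forall fun y hy => ?_)
        have hy0 : 0 < y := hy.1
        have hyt : y ≤ t := hy.2
        have h1 : |β (t - y) ν| ≤ Bβ := by
          refine hβB _ ⟨by linarith, by linarith [ht.2]⟩ ν hν
        have h2 : |Δk m y ν| ≤ Bβ ^ (m+1) * y ^ m / (Nat.factorial m : ℝ) :=
          ih y ⟨hy0.le, by linarith [ht.2]⟩
        have hBnn : (0:ℝ) ≤ Bβ := hBβ.le
        calc ‖β (t - y) ν * Δk m y ν‖ = |β (t - y) ν| * |Δk m y ν| := abs_mul _ _
          _ ≤ Bβ * (Bβ ^ (m+1) * y ^ m / (Nat.factorial m : ℝ)) :=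
            mul_le_mul h1 h2 (abs_nonneg _) hBnn
          _ = (Bβ ^ (m+2) / (Nat.factorial m : ℝ)) * y ^ m := by ring
      have hintg : IntervalIntegrable (fun y : ℝ => (Bβ ^ (m+2) / (Nat.factorial m : ℝ)) * y ^ m)
          MeasureTheory.volume 0 t := (Continuous.intervalIntegrable (by fun_prop)) _ _
      have hle := intervalIntegral.norm_integral_le_of_norm_le ht0
        (by rw [hIoc] at hptwise; exact (MeasureTheory.ae_restrict_iff' measurableSet_Ioc).1 hptwise) hintg |>.trans (le_abs_self _)
      have hval : ∫ y in (0:ℝ)..t, (Bβ ^ (m+2) / (Nat.factorial m : ℝ)) * y ^ m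
          = (Bβ ^ (m+2) / (Nat.factorial m : ℝ)) * (t ^ (m+1) / (m+1)) := by
        rw [intervalIntegral.integral_const_mul, integral_pow]
        norm_num
      rw [hval] at hle
      have heq : |(Bβ ^ (m+2) / (Nat.factorial m : ℝ)) * (t ^ (m+1) / (m+1))|
          = Bβ ^ (m+2) * t ^ (m+1) / (Nat.factorial (m+1) : ℝ) := by
        rw [abs_of_nonneg (by positivity)]
        rw [Nat.factorial_succ]
        push_cast
        rw [div_mul_div_comm]
        congr 1
        ring
      rw [heq] at hle
      exact hle
  -- abbreviations
  set Dx : ℝ := Bβ ^ (n+1) * x ^ n / (Nat.factorial n : ℝ) with hDx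
  set E : ℝ := Bβ ^ (n+1) * x ^ (n+1) / (Nat.factorial (n+1) : ℝ) with hE
  have hDxnn : 0 ≤ Dx := by rw [hDx]; positivity
  have hEnn : 0 ≤ E := by rw [hE]; positivity
  -- the key ε-estimate
  have key : ∀ ε : ℝ, 0 < ε →
      |deriv (fun x' => Δk (n+1) x' ν) x| ≤ (Bβ + ε) * (Dx + ε) + (αx + ε) * E := by
    intro ε hε
    -- δ₁ : bound on deriv βν on a thickening of [0,1]
    have hU : IsOpen {u : ℝ | |deriv (fun x' => β x' ν) u| < αx + ε} := by
      have : Continuous fun u => |deriv (fun x' => β x' ν) u| := hDc.abs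
      exact isOpen_lt this continuous_const
    have hsub : Icc (0:ℝ) 1 ⊆ {u : ℝ | |deriv (fun x' => β x' ν) u| < αx + ε} :=
      fun u hu => lt_of_le_of_lt (hβx u hu ν hν) (lt_add_of_pos_right _ hε)
    obtain ⟨δ₁, hδ₁pos, hδ₁⟩ := isCompact_Icc.exists_thickening_subset_open hU hsub
    have hD' : ∀ u : ℝ, -(δ₁/2) ≤ u → u ≤ 1 + δ₁/2 →
        |deriv (fun x' => β x' ν) u| ≤ αx + ε := by
      intro u h1 h2
      have hmem : u ∈ Metric.thickening δ₁ (Icc (0:ℝ) 1) := by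
        rw [Metric.mem_thickening_iff]
        rcases le_total u 0 with hu0 | hu0
        · refine ⟨0, by simp, ?_⟩
          rw [Real.dist_eq, abs_of_nonpos (by linarith)]
          linarith
        · rcases le_total u 1 with hu1 | hu1
          · exact ⟨u, ⟨hu0, hu1⟩, by simpa using hδ₁pos⟩
          · refine ⟨1, by simp, ?_⟩
            rw [Real.dist_eq, abs_of_nonneg (by linarith)]
            linarith
      exact (hδ₁ hmem).le
    -- δ₂ : bound on β near 0
    obtain ⟨δ₂, hδ₂pos, hδ₂⟩ := Metric.continuousAt_iff.1 (hβνc.continuousAt (x := 0)) ε hε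
    have hβ0 : |β 0 ν| ≤ Bβ := hβB 0 ⟨le_rfl, zero_le_one⟩ ν hν
    have hβnear : ∀ u : ℝ, |u| < δ₂ → |β u ν| ≤ Bβ + ε := by
      intro u hu
      have := hδ₂ (x := u) (by simpa [Real.dist_eq] using hu)
      rw [Real.dist_eq] at this
      calc |β u ν| = |β 0 ν + (β u ν - β 0 ν)| := by ring_nf
        _ ≤ |β 0 ν| + |β u ν - β 0 ν| := abs_add_le _ _
        _ ≤ Bβ + ε := add_le_add hβ0 this.le
    -- δ₃ : bound on Δk n near x
    obtain ⟨δ₃, hδ₃pos, hδ₃⟩ := Metric.continuousAt_iff.1 ((hcont n).continuousAt (x := x)) ε hε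
    have hΔx : |Δk n x ν| ≤ Dx := hbound n x ⟨hx0, hx1⟩
    have hΔnear : ∀ t : ℝ, |t - x| < δ₃ → |Δk n t ν| ≤ Dx + ε := by
      intro t htx
      have := hδ₃ (x := t) (by simpa [Real.dist_eq] using htx)
      rw [Real.dist_eq] at this
      calc |Δk n t ν| = |Δk n x ν + (Δk n t ν - Δk n x ν)| := by ring_nf
        _ ≤ |Δk n x ν| + |Δk n t ν - Δk n x ν| := abs_add_le _ _
        _ ≤ Dx + ε := add_le_add hΔx this.le
    set δ : ℝ := min (δ₁/2) (min δ₂ δ₃) with hδdef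
    have hδpos : 0 < δ := by
      refine lt_min (by linarith) (lt_min hδ₂pos hδ₃pos)
    have hδle1 : δ ≤ δ₁/2 := min_le_left _ _
    have hδle2 : δ ≤ δ₂ := le_trans (min_le_right _ _) (min_le_left _ _)
    have hδle3 : δ ≤ δ₃ := le_trans (min_le_right _ _) (min_le_right _ _)
    have hCnn : 0 ≤ (Bβ + ε) * (Dx + ε) + (αx + ε) * E := by positivity
    have hfun : (fun x' => Δk (n+1) x' ν)
        = fun x' => ∫ y in (0:ℝ)..x', β (x' - y) ν * Δk n y ν :=
      funext fun x' => hrec n x' ν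
    rw [hfun, ← Real.norm_eq_abs]
    refine norm_deriv_le_of_lip' hCnn ?_
    filter_upwards [Metric.ball_mem_nhds x hδpos] with y hy
    rw [Metric.mem_ball, Real.dist_eq] at hy
    -- interval integrability of the integrands
    have hint : ∀ z a b : ℝ, IntervalIntegrable (fun t => β (z - t) ν * Δk n t ν)
        MeasureTheory.volume a b := by
      intro z a b
      exact Continuous.intervalIntegrable
        ((hβνc.comp (continuous_const.sub continuous_id)).mul (hcont n)) a b
    have hsplit : (∫ t in (0:ℝ)..y, β (y - t) ν * Δk n t ν)
        - (∫ t in (0:ℝ)..x, β (x - t) ν * Δk n t ν)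
        = (∫ t in x..y, β (y - t) ν * Δk n t ν)
          + ∫ t in (0:ℝ)..x, (β (y - t) ν * Δk n t ν - β (x - t) ν * Δk n t ν) := by
      rw [intervalIntegral.integral_sub (hint y 0 x) (hint x 0 x)]
      rw [← intervalIntegral.integral_add_adjacent_intervals (hint y 0 x) (hint y x y)]
      ring
    -- Estimate 1
    have habs1 : ∀ t ∈ Set.uIoc x y, |t - x| ≤ |y - x| ∧ |y - t| ≤ |y - x| := by
      intro t ht
      obtain ⟨ht1, ht2⟩ := ht
      have h1 : x - |y - x| ≤ min x y := by
        rcases le_total x y with h | h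
        · rw [min_eq_left h]; linarith [abs_nonneg (y - x)]
        · rw [min_eq_right h]; have := neg_abs_le (y - x); linarith
      have h2 : max x y ≤ x + |y - x| := by
        rcases le_total x y with h | h
        · rw [max_eq_right h]; have := le_abs_self (y - x); linarith
        · rw [max_eq_left h]; linarith [abs_nonneg (y - x)]
      have h3 : y - |y - x| ≤ min x y := by
        rcases le_total x y with h | h
        · rw [min_eq_left h]; have := le_abs_self (y - x); linarith
        · rw [min_eq_right h]; linarith [abs_nonneg (y - x)]
      have h4 : max x y ≤ y + |y - x| := by
        rcases le_total x y with h | h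
        · rw [max_eq_right h]; linarith [abs_nonneg (y - x)]
        · rw [max_eq_left h]; have := neg_abs_le (y - x); linarith
      constructor
      · rw [abs_le]; constructor <;> linarith
      · rw [abs_le]; constructor <;> linarith
    have hest1 : ‖∫ t in x..y, β (y - t) ν * Δk n t ν‖ ≤ ((Bβ + ε) * (Dx + ε)) * |y - x| := by
      refine intervalIntegral.norm_integral_le_of_norm_le_const fun t ht => ?_
      obtain ⟨htx, hty⟩ := habs1 t ht
      have hb : |β (y - t) ν| ≤ Bβ + ε := hβnear _ (lt_of_le_of_lt hty (lt_of_lt_of_le hy hδle2))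
      have hd : |Δk n t ν| ≤ Dx + ε := hΔnear _ (lt_of_le_of_lt htx (lt_of_lt_of_le hy hδle3))
      calc ‖β (y - t) ν * Δk n t ν‖ = |β (y - t) ν| * |Δk n t ν| := abs_mul _ _
        _ ≤ (Bβ + ε) * (Dx + ε) :=
          mul_le_mul hb hd (abs_nonneg _) (by linarith)
    -- Estimate 2
    have hfacpos : (0:ℝ) < (Nat.factorial n : ℝ) := by positivity
    set c : ℝ := (αx + ε) * |y - x| * Bβ ^ (n+1) / (Nat.factorial n : ℝ) with hc
    have hIoc : Set.uIoc (0:ℝ) x = Ioc 0 x := uIoc_of_le hx0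
    have hmvt : ∀ t ∈ Ioc (0:ℝ) x,
        |β (y - t) ν - β (x - t) ν| ≤ (αx + ε) * |y - x| := by
      intro t ht
      have hs : Convex ℝ (Icc (-(δ₁/2)) (1 + δ₁/2)) := convex_Icc _ _
      have hdiff : ∀ u ∈ Icc (-(δ₁/2)) (1 + δ₁/2),
          DifferentiableAt ℝ (fun x' => β x' ν) u :=
        fun u _ => (hβν.differentiable one_ne_zero).differentiableAt
      have hbd : ∀ u ∈ Icc (-(δ₁/2)) (1 + δ₁/2),
          ‖deriv (fun x' => β x' ν) u‖ ≤ αx + ε := by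
        intro u hu
        rw [Real.norm_eq_abs]
        exact hD' u hu.1 hu.2
      have hxt : x - t ∈ Icc (-(δ₁/2)) (1 + δ₁/2) := by
        constructor
        · have : 0 ≤ x - t := by linarith [ht.2]
          linarith
        · have : x - t ≤ 1 := by linarith [ht.1]
          linarith
      have hyt : y - t ∈ Icc (-(δ₁/2)) (1 + δ₁/2) := by
        have h1 : -(δ₁/2) ≤ y - x := by
          have := neg_abs_le (y - x); have : -δ ≤ y - x := by
            have := neg_abs_le (y - x); linarith [hy]
          linarith [hδle1]
        have h2 : y - x ≤ δ₁/2 := le_trans (le_trans (le_abs_self _) hy.le) hδle1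
        constructor
        · have : 0 ≤ x - t := by linarith [ht.2]
          have : y - t = (x - t) + (y - x) := by ring
          linarith [hxt.1]
        · have : x - t ≤ 1 := by linarith [ht.1]
          have heq : y - t = (x - t) + (y - x) := by ring
          linarith
      have := hs.norm_image_sub_le_of_norm_deriv_le hdiff hbd hxt hyt
      rw [Real.norm_eq_abs, Real.norm_eq_abs] at this
      have heq : (y - t) - (x - t) = y - x := by ring
      rw [heq] at this
      exact this
    have hptwise2 : ∀ᵐ t ∂(MeasureTheory.volume.restrict (Set.uIoc (0:ℝ) x)),
        ‖β (y - t) ν * Δk n t ν - β (x - t) ν * Δk n t ν‖ ≤ c * t ^ n := by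
      rw [hIoc]
      refine (MeasureTheory.ae_restrict_iff' measurableSet_Ioc).2
        (Filter.Eventually.of_forall fun t ht => ?_)
      have h1 := hmvt t ht
      have h2 : |Δk n t ν| ≤ Bβ ^ (n+1) * t ^ n / (Nat.factorial n : ℝ) :=
        hbound n t ⟨ht.1.le, le_trans ht.2 hx1⟩
      calc ‖β (y - t) ν * Δk n t ν - β (x - t) ν * Δk n t ν‖
          = |β (y - t) ν - β (x - t) ν| * |Δk n t ν| := by
            rw [Real.norm_eq_abs, ← abs_mul, sub_mul]
        _ ≤ ((αx + ε) * |y - x|) * (Bβ ^ (n+1) * t ^ n / (Nat.factorial n : ℝ)) :=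
          mul_le_mul h1 h2 (abs_nonneg _) (by positivity)
        _ = c * t ^ n := by rw [hc]; ring
    have hintg2 : IntervalIntegrable (fun t : ℝ => c * t ^ n) MeasureTheory.volume 0 x :=
      (Continuous.intervalIntegrable (by fun_prop)) _ _
    have hest2' := intervalIntegral.norm_integral_le_of_norm_le hx0
        (by rw [hIoc] at hptwise2; exact (MeasureTheory.ae_restrict_iff' measurableSet_Ioc).1 hptwise2) hintg2 |>.trans (le_abs_self _)
    have hval2 : ∫ t in (0:ℝ)..x, c * t ^ n = c * (x ^ (n+1) / (n+1)) := by
      rw [intervalIntegral.integral_const_mul, integral_pow]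
      norm_num
    rw [hval2] at hest2'
    have hcnn : 0 ≤ c := by rw [hc]; positivity
    have heq2 : |c * (x ^ (n+1) / (n+1))| = ((αx + ε) * E) * |y - x| := by
      have hne1 : (Nat.factorial n : ℝ) ≠ 0 := ne_of_gt hfacpos
      have hne2 : ((n:ℝ)+1) ≠ 0 := by positivity
      rw [abs_of_nonneg (by positivity), hc, hE, Nat.factorial_succ]
      push_cast
      field_simp
    rw [heq2] at hest2'
    -- combine
    calc ‖(∫ t in (0:ℝ)..y, β (y - t) ν * Δk n t ν)
          - ∫ t in (0:ℝ)..x, β (x - t) ν * Δk n t ν‖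
        = ‖(∫ t in x..y, β (y - t) ν * Δk n t ν)
            + ∫ t in (0:ℝ)..x, (β (y - t) ν * Δk n t ν - β (x - t) ν * Δk n t ν)‖ := by
          rw [hsplit]
      _ ≤ ‖∫ t in x..y, β (y - t) ν * Δk n t ν‖
            + ‖∫ t in (0:ℝ)..x, (β (y - t) ν * Δk n t ν - β (x - t) ν * Δk n t ν)‖ :=
          norm_add_le _ _
      _ ≤ ((Bβ + ε) * (Dx + ε)) * |y - x| + ((αx + ε) * E) * |y - x| :=
          add_le_add hest1 hest2'
      _ = ((Bβ + ε) * (Dx + ε) + (αx + ε) * E) * ‖y - x‖ := by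
          rw [Real.norm_eq_abs]; ring
  -- pass to the limit ε → 0⁺
  have hlim : Filter.Tendsto (fun ε : ℝ => (Bβ + ε) * (Dx + ε) + (αx + ε) * E)
      (nhdsWithin 0 (Ioi 0)) (nhds (Bβ * Dx + αx * E)) := by
    have hc : ContinuousAt (fun ε : ℝ => (Bβ + ε) * (Dx + ε) + (αx + ε) * E) 0 := by fun_prop
    have := hc.tendsto.mono_left (nhdsWithin_le_nhds (s := Ioi (0:ℝ)))
    simpa using this
  have hfinal : |deriv (fun x' => Δk (n+1) x' ν) x| ≤ Bβ * Dx + αx * E := by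
    refine ge_of_tendsto hlim ?_
    filter_upwards [self_mem_nhdsWithin] with ε hε
    exact key ε hε
  have : Bβ * Dx + αx * E
      = Bβ ^ (n + 2) * x ^ n / (Nat.factorial n : ℝ)
        + αx * Bβ ^ (n + 1) * x ^ (n + 1) / (Nat.factorial (n + 1) : ℝ) := by
    rw [hDx, hE]
    ring
  linarith [hfinal, this.le, this.ge]
end

section
/- Let β : [0,1] × [-B_ν, B_ν] → ℝ be C¹ and set α_ν := max(‖β‖_∞, ‖β_ν‖_∞) on [0,1] × [-B_ν, B_ν]. Define Δk⁰ = -β and Δk^{n+1}(x,ν) = ∫₀ˣ β(x-y,ν)Δkⁿ(y,ν)dy. Then for all n ≥ 0, Δkⁿ is differentiable in ν and |Δkⁿ_ν(x,ν)| ≤ (n+1) α_ν^{n+1} xⁿ / n! for all (x,ν) ∈ [0,1] × [-B_ν, B_ν]. -/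
open intervalIntegral Real Set

theorem stmt_5 (Bν αν : ℝ) (hBν : 0 < Bν) (hαν : 0 < αν)
    (β : ℝ → ℝ → ℝ) (hβ : ContDiff ℝ 1 (Function.uncurry β))
    (hβB : ∀ x ∈ Icc (0:ℝ) 1, ∀ ν ∈ Icc (-Bν) Bν, |β x ν| ≤ αν)
    (hβν : ∀ x ∈ Icc (0:ℝ) 1, ∀ ν ∈ Icc (-Bν) Bν,
      |deriv (fun ν' => β x ν') ν| ≤ αν)
    (Δk : ℕ → ℝ → ℝ → ℝ)
    (h0 : ∀ x ν, Δk 0 x ν = -β x ν)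
    (hrec : ∀ n x ν, Δk (n+1) x ν = ∫ y in (0:ℝ)..x, β (x - y) ν * Δk n y ν) :
    ∀ n : ℕ, ∀ x ∈ Icc (0:ℝ) 1, ∀ ν ∈ Icc (-Bν) Bν,
      DifferentiableAt ℝ (fun ν' => Δk n x ν') ν ∧
      |deriv (fun ν' => Δk n x ν') ν| ≤
        (n + 1 : ℝ) * αν ^ (n + 1) * x ^ n / (Nat.factorial n : ℝ) := by
  -- continuity of β
  have hβcont : Continuous (fun p : ℝ × ℝ => β p.1 p.2) := hβ.continuous
  -- derivative of β in ν
  have hβd : ∀ x ν, HasDerivAt (fun ν' => β x ν')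
      (fderiv ℝ (Function.uncurry β) (x, ν) (0, 1)) ν := by
    intro x ν
    have h1 : HasFDerivAt (Function.uncurry β) (fderiv ℝ (Function.uncurry β) (x, ν)) (x, ν) :=
      (hβ.differentiable one_ne_zero (x, ν)).hasFDerivAt
    have h2 : HasDerivAt (fun ν' : ℝ => ((x : ℝ), ν')) ((0 : ℝ), (1 : ℝ)) ν :=
      (hasDerivAt_const ν x).prodMk (hasDerivAt_id ν)
    exact h1.comp_hasDerivAt ν h2
  have hG : ∀ x ν, HasDerivAt (fun ν' => β x ν') (deriv (fun ν' => β x ν') ν) ν := by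
    intro x ν
    have h := hβd x ν
    rw [h.deriv]; exact h
  have hGcont : Continuous (fun p : ℝ × ℝ => deriv (fun ν' => β p.1 ν') p.2) := by
    have h1 : Continuous (fun p : ℝ × ℝ => fderiv ℝ (Function.uncurry β) p (0, 1)) :=
      (hβ.continuous_fderiv one_ne_zero).clm_apply continuous_const
    have h2 : (fun p : ℝ × ℝ => deriv (fun ν' => β p.1 ν') p.2)
        = fun p => fderiv ℝ (Function.uncurry β) p (0, 1) := by
      funext p; exact (hβd p.1 p.2).deriv
    rw [h2]; exact h1
  have key : ∀ n : ℕ,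
      Continuous (fun p : ℝ × ℝ => Δk n p.1 p.2) ∧
      Continuous (fun p : ℝ × ℝ => deriv (fun ν' => Δk n p.1 ν') p.2) ∧
      (∀ x ν, HasDerivAt (fun ν' => Δk n x ν') (deriv (fun ν' => Δk n x ν') ν) ν) ∧
      (∀ x ∈ Icc (0:ℝ) 1, ∀ ν ∈ Icc (-Bν) Bν,
        |Δk n x ν| ≤ αν ^ (n+1) * x ^ n / (Nat.factorial n : ℝ)) ∧
      (∀ x ∈ Icc (0:ℝ) 1, ∀ ν ∈ Icc (-Bν) Bν,
        |deriv (fun ν' => Δk n x ν') ν| ≤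
          ((n : ℝ) + 1) * αν ^ (n+1) * x ^ n / (Nat.factorial n : ℝ)) := by
    intro n
    induction n with
    | zero =>
      have hfun : ∀ x : ℝ, (fun ν' => Δk 0 x ν') = fun ν' => -β x ν' :=
        fun x => funext fun ν' => h0 x ν'
      have hD0 : ∀ x ν, HasDerivAt (fun ν' => Δk 0 x ν') (-(deriv (fun ν' => β x ν') ν)) ν := by
        intro x ν; rw [hfun x]; exact (hG x ν).neg
      have hderiv0 : ∀ x ν, deriv (fun ν' => Δk 0 x ν') ν = -(deriv (fun ν' => β x ν') ν) :=
        fun x ν => (hD0 x ν).deriv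
      refine ⟨?_, ?_, ?_, ?_, ?_⟩
      · have : (fun p : ℝ × ℝ => Δk 0 p.1 p.2) = fun p => -β p.1 p.2 :=
          funext fun p => h0 _ _
        rw [this]; exact hβcont.neg
      · have : (fun p : ℝ × ℝ => deriv (fun ν' => Δk 0 p.1 ν') p.2)
            = fun p => -(deriv (fun ν' => β p.1 ν') p.2) := funext fun p => hderiv0 _ _
        rw [this]; exact hGcont.neg
      · intro x ν; rw [hderiv0 x ν]; exact hD0 x ν
      · intro x hx ν hν
        rw [h0]
        simpa using hβB x hx ν hν
      · intro x hx ν hν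
        rw [hderiv0, abs_neg]
        simpa using hβν x hx ν hν
    | succ n ih =>
      obtain ⟨ihc, ihdc, ihd, ihb, ihdb⟩ := ih
      -- step derivative via dominated convergence
      have hstep : ∀ x ν, HasDerivAt (fun ν' => Δk (n+1) x ν')
          (∫ y in (0:ℝ)..x, (deriv (fun ν' => β (x - y) ν') ν * Δk n y ν
            + β (x - y) ν * deriv (fun ν' => Δk n y ν') ν)) ν := by
        intro x ν
        have hfun : (fun ν' => Δk (n+1) x ν')
            = fun ν' => ∫ y in (0:ℝ)..x, β (x - y) ν' * Δk n y ν' :=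
          funext fun ν' => hrec n x ν'
        rw [hfun]
        have hF'cont : Continuous (fun p : ℝ × ℝ =>
            deriv (fun ν' => β (x - p.2) ν') p.1 * Δk n p.2 p.1
            + β (x - p.2) p.1 * deriv (fun ν' => Δk n p.2 ν') p.1) := by
          have m1 : Continuous (fun p : ℝ × ℝ => ((x - p.2 : ℝ), p.1)) :=
            (continuous_const.sub continuous_snd).prodMk continuous_fst
          have m2 : Continuous (fun p : ℝ × ℝ => (p.2, p.1)) :=
            continuous_snd.prodMk continuous_fst
          exact ((hGcont.comp m1).mul (ihc.comp m2)).add ((hβcont.comp m1).mul (ihdc.comp m2))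
        obtain ⟨M, hM⟩ := ((isCompact_closedBall ν 1).prod (isCompact_uIcc (a := (0:ℝ))
          (b := x))).exists_bound_of_continuousOn hF'cont.continuousOn
        have main := intervalIntegral.hasDerivAt_integral_of_dominated_loc_of_deriv_le
          (F := fun ν' y => β (x - y) ν' * Δk n y ν')
          (F' := fun ν' y => deriv (fun ν'' => β (x - y) ν'') ν' * Δk n y ν'
            + β (x - y) ν' * deriv (fun ν'' => Δk n y ν'') ν')
          (bound := fun _ => M) (a := 0) (b := x) (x₀ := ν) (μ := MeasureTheory.volume)
          (Metric.ball_mem_nhds ν one_pos) ?_ ?_ ?_ ?_ ?_ ?_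
        · exact main.2
        · refine Filter.Eventually.of_forall fun ν' => Continuous.aestronglyMeasurable ?_
          exact (hβcont.comp (((continuous_const.sub continuous_id).prodMk
            continuous_const))).mul (ihc.comp (continuous_id.prodMk continuous_const))
        · exact ((hβcont.comp (((continuous_const.sub continuous_id).prodMk
            continuous_const))).mul (ihc.comp (continuous_id.prodMk
            continuous_const))).intervalIntegrable _ _
        · refine Continuous.aestronglyMeasurable ?_
          exact hF'cont.comp (continuous_const.prodMk continuous_id)
        · refine Filter.Eventually.of_forall fun t ht ν' hν' => ?_
          exact hM (ν', t) ⟨Metric.ball_subset_closedBall hν', uIoc_subset_uIcc ht⟩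
        · exact intervalIntegrable_const
        · refine Filter.Eventually.of_forall fun t ht ν' hν' => ?_
          exact (hG (x - t) ν').mul (ihd t ν')
      have hderiv : ∀ x ν, deriv (fun ν' => Δk (n+1) x ν') ν
          = ∫ y in (0:ℝ)..x, (deriv (fun ν' => β (x - y) ν') ν * Δk n y ν
            + β (x - y) ν * deriv (fun ν' => Δk n y ν') ν) :=
        fun x ν => (hstep x ν).deriv
      refine ⟨?_, ?_, ?_, ?_, ?_⟩
      · -- continuity of Δk (n+1)
        have h1 : (fun p : ℝ × ℝ => Δk (n+1) p.1 p.2)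
            = fun p : ℝ × ℝ => ∫ y in (0:ℝ)..p.1, β (p.1 - y) p.2 * Δk n y p.2 :=
          funext fun p => hrec n p.1 p.2
        rw [h1]
        apply intervalIntegral.continuous_parametric_intervalIntegral_of_continuous
          (f := fun (p : ℝ × ℝ) (y : ℝ) => β (p.1 - y) p.2 * Δk n y p.2)
          (s := fun p : ℝ × ℝ => p.1) ?_ continuous_fst
        have m1 : Continuous (fun q : (ℝ × ℝ) × ℝ => ((q.1.1 - q.2 : ℝ), q.1.2)) :=
          (continuous_fst.fst.sub continuous_snd).prodMk continuous_fst.snd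
        have m2 : Continuous (fun q : (ℝ × ℝ) × ℝ => (q.2, q.1.2)) :=
          continuous_snd.prodMk continuous_fst.snd
        exact (hβcont.comp m1).mul (ihc.comp m2)
      · -- continuity of the derivative
        have h1 : (fun p : ℝ × ℝ => deriv (fun ν' => Δk (n+1) p.1 ν') p.2)
            = fun p : ℝ × ℝ => ∫ y in (0:ℝ)..p.1,
              (deriv (fun ν' => β (p.1 - y) ν') p.2 * Δk n y p.2
                + β (p.1 - y) p.2 * deriv (fun ν' => Δk n y ν') p.2) :=
          funext fun p => hderiv p.1 p.2
        rw [h1]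
        apply intervalIntegral.continuous_parametric_intervalIntegral_of_continuous
          (f := fun (p : ℝ × ℝ) (y : ℝ) =>
            deriv (fun ν' => β (p.1 - y) ν') p.2 * Δk n y p.2
              + β (p.1 - y) p.2 * deriv (fun ν' => Δk n y ν') p.2)
          (s := fun p : ℝ × ℝ => p.1) ?_ continuous_fst
        have m1 : Continuous (fun q : (ℝ × ℝ) × ℝ => ((q.1.1 - q.2 : ℝ), q.1.2)) :=
          (continuous_fst.fst.sub continuous_snd).prodMk continuous_fst.snd
        have m2 : Continuous (fun q : (ℝ × ℝ) × ℝ => (q.2, q.1.2)) :=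
          continuous_snd.prodMk continuous_fst.snd
        exact ((hGcont.comp m1).mul (ihc.comp m2)).add ((hβcont.comp m1).mul (ihdc.comp m2))
      · intro x ν; rw [hderiv x ν]; exact hstep x ν
      · -- bound on Δk (n+1)
        intro x hx ν hν
        have hx0 : (0:ℝ) ≤ x := hx.1
        have hx1 : x ≤ 1 := hx.2
        have hcont : Continuous (fun y => β (x - y) ν * Δk n y ν) :=
          (hβcont.comp (((continuous_const.sub continuous_id).prodMk
            continuous_const))).mul (ihc.comp (continuous_id.prodMk continuous_const))
        rw [hrec]
        calc |∫ y in (0:ℝ)..x, β (x - y) ν * Δk n y ν|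
            ≤ ∫ y in (0:ℝ)..x, |β (x - y) ν * Δk n y ν| :=
              intervalIntegral.abs_integral_le_integral_abs hx0
          _ ≤ ∫ y in (0:ℝ)..x, αν ^ (n+2) / (Nat.factorial n : ℝ) * y ^ n := by
              apply intervalIntegral.integral_mono_on hx0 (hcont.abs.intervalIntegrable 0 x)
                ((continuous_const.mul (continuous_pow n)).intervalIntegrable 0 x)
              intro y hy
              have hy1 : y ∈ Icc (0:ℝ) 1 := ⟨hy.1, hy.2.trans hx1⟩
              have hxy : x - y ∈ Icc (0:ℝ) 1 := ⟨by linarith [hy.2], by linarith [hy.1]⟩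
              rw [abs_mul]
              calc |β (x - y) ν| * |Δk n y ν|
                  ≤ αν * (αν ^ (n+1) * y ^ n / (Nat.factorial n : ℝ)) :=
                    mul_le_mul (hβB _ hxy _ hν) (ihb y hy1 ν hν) (abs_nonneg _) hαν.le
                _ = αν ^ (n+2) / (Nat.factorial n : ℝ) * y ^ n := by ring
          _ = αν ^ (n+1+1) * x ^ (n+1) / (Nat.factorial (n+1) : ℝ) := by
              rw [intervalIntegral.integral_const_mul, integral_pow]
              have h1 : ((n:ℝ) + 1) ≠ 0 := by positivity
              have h2 : (Nat.factorial n : ℝ) ≠ 0 := by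
                exact_mod_cast Nat.factorial_ne_zero n
              rw [Nat.factorial_succ, zero_pow (Nat.succ_ne_zero n), sub_zero]
              push_cast
              field_simp
              try ring
              try tauto
      · -- bound on the derivative
        intro x hx ν hν
        have hx0 : (0:ℝ) ≤ x := hx.1
        have hx1 : x ≤ 1 := hx.2
        have hcont : Continuous (fun y => deriv (fun ν' => β (x - y) ν') ν * Δk n y ν
            + β (x - y) ν * deriv (fun ν' => Δk n y ν') ν) := by
          have m1 : Continuous (fun y : ℝ => ((x - y : ℝ), ν)) :=
            (continuous_const.sub continuous_id).prodMk continuous_const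
          have m2 : Continuous (fun y : ℝ => (y, ν)) :=
            continuous_id.prodMk continuous_const
          exact ((hGcont.comp m1).mul (ihc.comp m2)).add ((hβcont.comp m1).mul (ihdc.comp m2))
        rw [hderiv x ν]
        calc |∫ y in (0:ℝ)..x, (deriv (fun ν' => β (x - y) ν') ν * Δk n y ν
              + β (x - y) ν * deriv (fun ν' => Δk n y ν') ν)|
            ≤ ∫ y in (0:ℝ)..x, |deriv (fun ν' => β (x - y) ν') ν * Δk n y ν
              + β (x - y) ν * deriv (fun ν' => Δk n y ν') ν| :=
              intervalIntegral.abs_integral_le_integral_abs hx0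
          _ ≤ ∫ y in (0:ℝ)..x, ((n:ℝ) + 2) * αν ^ (n+2) / (Nat.factorial n : ℝ) * y ^ n := by
              apply intervalIntegral.integral_mono_on hx0 (hcont.abs.intervalIntegrable 0 x)
                ((continuous_const.mul (continuous_pow n)).intervalIntegrable 0 x)
              intro y hy
              have hy1 : y ∈ Icc (0:ℝ) 1 := ⟨hy.1, hy.2.trans hx1⟩
              have hxy : x - y ∈ Icc (0:ℝ) 1 := ⟨by linarith [hy.2], by linarith [hy.1]⟩
              have hy0 : 0 ≤ y := hy.1
              calc |deriv (fun ν' => β (x - y) ν') ν * Δk n y ν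
                    + β (x - y) ν * deriv (fun ν' => Δk n y ν') ν|
                  ≤ |deriv (fun ν' => β (x - y) ν') ν| * |Δk n y ν|
                    + |β (x - y) ν| * |deriv (fun ν' => Δk n y ν') ν| := by
                    rw [← abs_mul, ← abs_mul]; exact abs_add_le _ _
                _ ≤ αν * (αν ^ (n+1) * y ^ n / (Nat.factorial n : ℝ))
                    + αν * (((n:ℝ) + 1) * αν ^ (n+1) * y ^ n / (Nat.factorial n : ℝ)) := by
                    exact add_le_add
                      (mul_le_mul (hβν _ hxy _ hν) (ihb y hy1 ν hν) (abs_nonneg _) hαν.le)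
                      (mul_le_mul (hβB _ hxy _ hν) (ihdb y hy1 ν hν) (abs_nonneg _) hαν.le)
                _ = ((n:ℝ) + 2) * αν ^ (n+2) / (Nat.factorial n : ℝ) * y ^ n := by ring
          _ = (((n+1 : ℕ) : ℝ) + 1) * αν ^ (n+1+1) * x ^ (n+1) / (Nat.factorial (n+1) : ℝ) := by
              rw [intervalIntegral.integral_const_mul, integral_pow]
              have h1 : ((n:ℝ) + 1) ≠ 0 := by positivity
              have h2 : (Nat.factorial n : ℝ) ≠ 0 := by
                exact_mod_cast Nat.factorial_ne_zero n
              rw [Nat.factorial_succ, zero_pow (Nat.succ_ne_zero n), sub_zero]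
              push_cast
              field_simp
              try ring
              try tauto
      
  intro n x hx ν hν
  obtain ⟨_, _, h3, _, h5⟩ := key n
  exact ⟨(h3 x ν).differentiableAt, h5 x hx ν hν⟩
end

section
/- Let β : [0,1] × [-B_ν, B_ν] → ℝ be C¹ and let k be the unique solution of k(x,ν) = -β(x,ν) + ∫₀ˣ β(x-y,ν)k(y,ν)dy. Then k is C¹ in ν and |k_ν(x,ν)| ≤ α_ν e^{α_ν x}(1 + α_ν x) for all (x,ν) ∈ [0,1] × [-B_ν, B_ν], where α_ν := max(‖β‖_∞, ‖β_ν‖_∞). -/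
open intervalIntegral Real Set MeasureTheory Filter Topology



noncomputable def Kseq (β : ℝ → ℝ → ℝ) : ℕ → ℝ → ℝ → ℝ
  | 0 => fun x ν => -β x ν
  | (n+1) => fun x ν => -β x ν + ∫ y in (0:ℝ)..x, β (x - y) ν * Kseq β n y ν

noncomputable def Dseq (β βd : ℝ → ℝ → ℝ) : ℕ → ℝ → ℝ → ℝ
  | 0 => fun x ν => -βd x ν
  | (n+1) => fun x ν => -βd x ν +
      ∫ y in (0:ℝ)..x, (βd (x - y) ν * Kseq β n y ν + β (x - y) ν * Dseq β βd n y ν)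

lemma contK {β : ℝ → ℝ → ℝ} (hβ : Continuous (Function.uncurry β)) :
    ∀ n, Continuous (Function.uncurry (Kseq β n)) := by
  intro n
  induction n with
  | zero => exact hβ.neg
  | succ n ih =>
    have h1 : Continuous (Function.uncurry
        (fun (p : ℝ × ℝ) (y : ℝ) => β (p.1 - y) p.2 * Kseq β n y p.2)) := by
      exact (hβ.comp ((continuous_fst.fst.sub continuous_snd).prodMk continuous_fst.snd)).mul
        (ih.comp (continuous_snd.prodMk continuous_fst.snd))
    have := intervalIntegral.continuous_parametric_intervalIntegral_of_continuous
      (μ := volume) (a₀ := (0:ℝ)) h1 continuous_fst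
    exact hβ.neg.add this

lemma contD {β βd : ℝ → ℝ → ℝ} (hβ : Continuous (Function.uncurry β))
    (hβd : Continuous (Function.uncurry βd)) :
    ∀ n, Continuous (Function.uncurry (Dseq β βd n)) := by
  intro n
  induction n with
  | zero => exact hβd.neg
  | succ n ih =>
    have h1 : Continuous (Function.uncurry
        (fun (p : ℝ × ℝ) (y : ℝ) => βd (p.1 - y) p.2 * Kseq β n y p.2
          + β (p.1 - y) p.2 * Dseq β βd n y p.2)) := by
      exact ((hβd.comp ((continuous_fst.fst.sub continuous_snd).prodMk continuous_fst.snd)).mul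
        ((contK hβ n).comp (continuous_snd.prodMk continuous_fst.snd))).add
        ((hβ.comp ((continuous_fst.fst.sub continuous_snd).prodMk continuous_fst.snd)).mul
        (ih.comp (continuous_snd.prodMk continuous_fst.snd)))
    have := intervalIntegral.continuous_parametric_intervalIntegral_of_continuous
      (μ := volume) (a₀ := (0:ℝ)) h1 continuous_fst
    exact hβd.neg.add this

lemma hasDerivAt_param_integral (x : ℝ) (G G' : ℝ → ℝ → ℝ)
    (hG : Continuous (Function.uncurry G)) (hG' : Continuous (Function.uncurry G'))
    (hd : ∀ ν y, HasDerivAt (fun ν' => G ν' y) (G' ν y) ν) (ν₀ : ℝ) :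
    HasDerivAt (fun ν => ∫ y in (0:ℝ)..x, G ν y) (∫ y in (0:ℝ)..x, G' ν₀ y) ν₀ := by
  obtain ⟨C, hC⟩ := ((isCompact_closedBall ν₀ 1).prod isCompact_uIcc).exists_bound_of_continuousOn
    (s := Metric.closedBall ν₀ 1 ×ˢ uIcc (0:ℝ) x) hG'.continuousOn
  refine (intervalIntegral.hasDerivAt_integral_of_dominated_loc_of_deriv_le
    (F := G) (F' := G') (bound := fun _ => C) (s := Metric.ball ν₀ 1) (Metric.ball_mem_nhds ν₀ zero_lt_one)
    (Filter.Eventually.of_forall fun ν =>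
      (hG.comp (Continuous.prodMk_right ν)).aestronglyMeasurable)
    ((hG.comp (Continuous.prodMk_right ν₀)).intervalIntegrable 0 x)
    (hG'.comp (Continuous.prodMk_right ν₀)).aestronglyMeasurable
    (Filter.Eventually.of_forall fun y hy ν hν => ?_)
    (intervalIntegrable_const)
    (Filter.Eventually.of_forall fun y hy ν hν => hd ν y)).2
  exact hC (ν, y) ⟨Metric.ball_subset_closedBall hν, uIoc_subset_uIcc hy⟩

lemma hasDerivK {β βd : ℝ → ℝ → ℝ} (hβ : Continuous (Function.uncurry β))
    (hβd : Continuous (Function.uncurry βd))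
    (hdβ : ∀ x ν, HasDerivAt (fun ν' => β x ν') (βd x ν) ν) :
    ∀ n x ν, HasDerivAt (fun ν' => Kseq β n x ν') (Dseq β βd n x ν) ν := by
  intro n
  induction n with
  | zero => exact fun x ν => (hdβ x ν).neg
  | succ n ih =>
    intro x ν
    have h2 := hasDerivAt_param_integral x (fun ν' y => β (x - y) ν' * Kseq β n y ν')
      (fun ν' y => βd (x - y) ν' * Kseq β n y ν' + β (x - y) ν' * Dseq β βd n y ν')
      ((hβ.comp ((continuous_const.sub continuous_snd).prodMk continuous_fst)).mul
        ((contK hβ n).comp (continuous_snd.prodMk continuous_fst)))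
      (((hβd.comp ((continuous_const.sub continuous_snd).prodMk continuous_fst)).mul
        ((contK hβ n).comp (continuous_snd.prodMk continuous_fst))).add
        ((hβ.comp ((continuous_const.sub continuous_snd).prodMk continuous_fst)).mul
        ((contD hβ hβd n).comp (continuous_snd.prodMk continuous_fst))))
      (fun ν' y => (hdβ (x - y) ν').mul (ih y ν')) ν
    exact (hdβ x ν).neg.add h2


lemma int_exp' (c x : ℝ) : ∫ y in (0:ℝ)..x, c * Real.exp (c*y) = Real.exp (c*x) - 1 := by
  have h : ∀ y ∈ uIcc (0:ℝ) x, HasDerivAt (fun y => Real.exp (c*y)) (c * Real.exp (c*y)) y := by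
    intro y _
    have := ((hasDerivAt_id y).const_mul c).exp
    simpa [mul_comm] using this
  have := intervalIntegral.integral_eq_sub_of_hasDerivAt h
    ((continuous_const.mul ((Real.continuous_exp.comp (continuous_const.mul continuous_id)))).intervalIntegrable 0 x)
  simpa using this

lemma int_exp2' (c x : ℝ) :
    ∫ y in (0:ℝ)..x, c * (Real.exp (c*y) * (2 + c*y)) = Real.exp (c*x) * (1 + c*x) - 1 := by
  have h : ∀ y ∈ uIcc (0:ℝ) x, HasDerivAt (fun y => Real.exp (c*y) * (1 + c*y))
      (c * (Real.exp (c*y) * (2 + c*y))) y := by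
    intro y _
    have h1 : HasDerivAt (fun y : ℝ => c*y) c y := by simpa using (hasDerivAt_id y).const_mul c
    have h2 := h1.exp
    have h3 : HasDerivAt (fun y : ℝ => 1 + c*y) c y := h1.const_add 1
    have := h2.mul h3
    exact this.congr_deriv (by ring)
  have hcont : Continuous (fun y : ℝ => c * (Real.exp (c*y) * (2 + c*y))) := by continuity
  have := intervalIntegral.integral_eq_sub_of_hasDerivAt h (hcont.intervalIntegrable 0 x)
  simpa using this

lemma step_bound {x : ℝ} (hx0 : 0 ≤ x) {f : ℝ → ℝ} (hf : IntervalIntegrable f volume 0 x)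
    {c : ℝ} (hc : 0 ≤ c) (n : ℕ) (hb : ∀ y ∈ Ioc (0:ℝ) x, |f y| ≤ c * y ^ n) :
    |∫ y in (0:ℝ)..x, f y| ≤ c * x ^ (n+1) / (n + 1) := by
  have hg : IntervalIntegrable (fun y => c * y ^ n) volume 0 x :=
    (continuous_const.mul (continuous_pow n)).intervalIntegrable 0 x
  have hval : (∫ y in (0:ℝ)..x, c * y ^ n) = c * x ^ (n+1) / (n+1) := by
    rw [intervalIntegral.integral_const_mul, integral_pow, zero_pow (Nat.succ_ne_zero n)]
    push_cast; ring
  have h := intervalIntegral.norm_integral_le_abs_of_norm_le (f := f) (μ := volume) (a := 0) (b := x)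
    (g := fun y => c * y ^ n) ?_ hg
  · rw [hval] at h
    rw [Real.norm_eq_abs] at h
    refine h.trans (le_of_eq (abs_of_nonneg ?_))
    positivity
  · rw [uIoc_of_le hx0]
    exact ae_restrict_of_forall_mem measurableSet_Ioc
      (fun y hy => by rw [Real.norm_eq_abs]; exact hb y hy)

-- generic bound for |∫ f| with pointwise bound, value computed exactly
lemma abs_int_le {x : ℝ} (hx0 : 0 ≤ x) {f g : ℝ → ℝ} (hf : IntervalIntegrable f volume 0 x)
    (hg : IntervalIntegrable g volume 0 x)
    (hb : ∀ y ∈ Ioc (0:ℝ) x, |f y| ≤ g y) :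
    |∫ y in (0:ℝ)..x, f y| ≤ |∫ y in (0:ℝ)..x, g y| := by
  have h := intervalIntegral.norm_integral_le_abs_of_norm_le (f := f) (μ := volume) (a := 0) (b := x)
    (g := g) ?_ hg
  · simpa using h
  · rw [uIoc_of_le hx0]
    exact ae_restrict_of_forall_mem measurableSet_Ioc
      (fun y hy => by rw [Real.norm_eq_abs]; exact hb y hy)

lemma boundK {β : ℝ → ℝ → ℝ} {Bν αν : ℝ} (hαν : 0 < αν)
    (hβc : Continuous (Function.uncurry β))
    (hβB : ∀ x ∈ Icc (0:ℝ) 1, ∀ ν ∈ Icc (-Bν) Bν, |β x ν| ≤ αν) :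
    ∀ n, ∀ x ∈ Icc (0:ℝ) 1, ∀ ν ∈ Icc (-Bν) Bν,
      |Kseq β n x ν| ≤ αν * Real.exp (αν * x) := by
  intro n
  induction n with
  | zero =>
    intro x hx ν hν
    have h1 : (1:ℝ) ≤ Real.exp (αν * x) := Real.one_le_exp (mul_nonneg hαν.le hx.1)
    have h2 := hβB x hx ν hν
    simp only [Kseq, abs_neg]
    nlinarith
  | succ n ih =>
    intro x hx ν hν
    have hcont1 : Continuous (fun y => β (x - y) ν * Kseq β n y ν) :=
      (hβc.comp ((continuous_const.sub continuous_id).prodMk continuous_const)).mul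
        ((contK hβc n).comp (continuous_id.prodMk continuous_const))
    have hg : IntervalIntegrable (fun y => αν * (αν * Real.exp (αν * y))) volume 0 x := by
      apply Continuous.intervalIntegrable; continuity
    have hb : ∀ y ∈ Ioc (0:ℝ) x, |β (x - y) ν * Kseq β n y ν| ≤ αν * (αν * Real.exp (αν * y)) := by
      intro y hy
      have hy1 : y ∈ Icc (0:ℝ) 1 := ⟨hy.1.le, hy.2.trans hx.2⟩
      have hxy : x - y ∈ Icc (0:ℝ) 1 := ⟨by linarith [hy.2], by linarith [hy.1, hx.2]⟩
      rw [abs_mul]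
      exact mul_le_mul (hβB _ hxy ν hν) (ih y hy1 ν hν) (abs_nonneg _) hαν.le
    have hI := abs_int_le hx.1 (hcont1.intervalIntegrable 0 x) hg hb
    have hval : (∫ y in (0:ℝ)..x, αν * (αν * Real.exp (αν * y)))
        = αν * (Real.exp (αν * x) - 1) := by
      rw [intervalIntegral.integral_const_mul, int_exp']
    have h1 : (1:ℝ) ≤ Real.exp (αν * x) := Real.one_le_exp (mul_nonneg hαν.le hx.1)
    have habs : |αν * (Real.exp (αν * x) - 1)| = αν * (Real.exp (αν * x) - 1) :=
      abs_of_nonneg (by nlinarith)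
    rw [hval, habs] at hI
    calc |Kseq β (n+1) x ν|
        ≤ |β x ν| + |∫ y in (0:ℝ)..x, β (x - y) ν * Kseq β n y ν| := by
          simp only [Kseq]
          exact (abs_add_le _ _).trans (by rw [abs_neg])
      _ ≤ αν + αν * (Real.exp (αν * x) - 1) := add_le_add (hβB x hx ν hν) hI
      _ = αν * Real.exp (αν * x) := by ring

lemma boundD {β βd : ℝ → ℝ → ℝ} {Bν αν : ℝ} (hαν : 0 < αν)
    (hβc : Continuous (Function.uncurry β)) (hβdc : Continuous (Function.uncurry βd))
    (hβB : ∀ x ∈ Icc (0:ℝ) 1, ∀ ν ∈ Icc (-Bν) Bν, |β x ν| ≤ αν)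
    (hβdB : ∀ x ∈ Icc (0:ℝ) 1, ∀ ν ∈ Icc (-Bν) Bν, |βd x ν| ≤ αν) :
    ∀ n, ∀ x ∈ Icc (0:ℝ) 1, ∀ ν ∈ Icc (-Bν) Bν,
      |Dseq β βd n x ν| ≤ αν * Real.exp (αν * x) * (1 + αν * x) := by
  intro n
  induction n with
  | zero =>
    intro x hx ν hν
    have h1 : (1:ℝ) ≤ Real.exp (αν * x) := Real.one_le_exp (mul_nonneg hαν.le hx.1)
    have h2 := hβdB x hx ν hν
    have h3 : 0 ≤ αν * x := mul_nonneg hαν.le hx.1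
    have h4 : (1:ℝ) * 1 ≤ Real.exp (αν * x) * (1 + αν * x) :=
      mul_le_mul h1 (by linarith) zero_le_one (Real.exp_pos _).le
    simp only [Dseq, abs_neg]
    nlinarith
  | succ n ih =>
    intro x hx ν hν
    have hcont1 : Continuous (fun y => βd (x - y) ν * Kseq β n y ν
        + β (x - y) ν * Dseq β βd n y ν) :=
      ((hβdc.comp ((continuous_const.sub continuous_id).prodMk continuous_const)).mul
        ((contK hβc n).comp (continuous_id.prodMk continuous_const))).add
      ((hβc.comp ((continuous_const.sub continuous_id).prodMk continuous_const)).mul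
        ((contD hβc hβdc n).comp (continuous_id.prodMk continuous_const)))
    have hg : IntervalIntegrable
        (fun y => αν * (αν * (Real.exp (αν * y) * (2 + αν * y)))) volume 0 x := by
      apply Continuous.intervalIntegrable; continuity
    have hb : ∀ y ∈ Ioc (0:ℝ) x, |βd (x - y) ν * Kseq β n y ν + β (x - y) ν * Dseq β βd n y ν|
        ≤ αν * (αν * (Real.exp (αν * y) * (2 + αν * y))) := by
      intro y hy
      have hy1 : y ∈ Icc (0:ℝ) 1 := ⟨hy.1.le, hy.2.trans hx.2⟩
      have hxy : x - y ∈ Icc (0:ℝ) 1 := ⟨by linarith [hy.2], by linarith [hy.1, hx.2]⟩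
      calc |βd (x - y) ν * Kseq β n y ν + β (x - y) ν * Dseq β βd n y ν|
          ≤ |βd (x - y) ν| * |Kseq β n y ν| + |β (x - y) ν| * |Dseq β βd n y ν| := by
            refine (abs_add_le _ _).trans ?_
            rw [abs_mul, abs_mul]
        _ ≤ αν * (αν * Real.exp (αν * y))
            + αν * (αν * Real.exp (αν * y) * (1 + αν * y)) :=
            add_le_add
              (mul_le_mul (hβdB _ hxy ν hν) (boundK hαν hβc hβB n y hy1 ν hν)
                (abs_nonneg _) hαν.le)
              (mul_le_mul (hβB _ hxy ν hν) (ih y hy1 ν hν) (abs_nonneg _) hαν.le)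
        _ = αν * (αν * (Real.exp (αν * y) * (2 + αν * y))) := by ring
    have hI := abs_int_le hx.1 (hcont1.intervalIntegrable 0 x) hg hb
    have hval : (∫ y in (0:ℝ)..x, αν * (αν * (Real.exp (αν * y) * (2 + αν * y))))
        = αν * (Real.exp (αν * x) * (1 + αν * x) - 1) := by
      rw [intervalIntegral.integral_const_mul, int_exp2']
    have h1 : (1:ℝ) ≤ Real.exp (αν * x) := Real.one_le_exp (mul_nonneg hαν.le hx.1)
    have h3 : 0 ≤ αν * x := mul_nonneg hαν.le hx.1
    have h4 : (1:ℝ) * 1 ≤ Real.exp (αν * x) * (1 + αν * x) :=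
      mul_le_mul h1 (by linarith) zero_le_one (Real.exp_pos _).le
    have habs : |αν * (Real.exp (αν * x) * (1 + αν * x) - 1)|
        = αν * (Real.exp (αν * x) * (1 + αν * x) - 1) := abs_of_nonneg (by nlinarith)
    rw [hval, habs] at hI
    calc |Dseq β βd (n+1) x ν|
        ≤ |βd x ν| + |∫ y in (0:ℝ)..x, (βd (x - y) ν * Kseq β n y ν
            + β (x - y) ν * Dseq β βd n y ν)| := by
          simp only [Dseq]
          exact (abs_add_le _ _).trans (by rw [abs_neg])
      _ ≤ αν + αν * (Real.exp (αν * x) * (1 + αν * x) - 1) := add_le_add (hβdB x hx ν hν) hI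
      _ = αν * Real.exp (αν * x) * (1 + αν * x) := by ring

theorem stmt_6 (Bν αν : ℝ) (hBν : 0 < Bν) (hαν : 0 < αν)
    (β : ℝ → ℝ → ℝ) (hβ : ContDiff ℝ 1 (Function.uncurry β))
    (hβB : ∀ x ∈ Icc (0:ℝ) 1, ∀ ν ∈ Icc (-Bν) Bν, |β x ν| ≤ αν)
    (hβν : ∀ x ∈ Icc (0:ℝ) 1, ∀ ν ∈ Icc (-Bν) Bν,
      |deriv (fun ν' => β x ν') ν| ≤ αν)
    (k : ℝ → ℝ → ℝ) (hkc : Continuous (Function.uncurry k))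
    (hk : ∀ x ∈ Icc (0:ℝ) 1, ∀ ν : ℝ,
      k x ν = -β x ν + ∫ y in (0:ℝ)..x, β (x - y) ν * k y ν) :
    ∃ kν : ℝ → ℝ → ℝ,
      ContinuousOn (Function.uncurry kν) (Icc (0:ℝ) 1 ×ˢ Icc (-Bν) Bν) ∧
      ∀ x ∈ Icc (0:ℝ) 1, ∀ ν ∈ Icc (-Bν) Bν,
        HasDerivAt (fun ν' => k x ν') (kν x ν) ν ∧
        |kν x ν| ≤ αν * Real.exp (αν * x) * (1 + αν * x) := by
  classical
  have hβc : Continuous (Function.uncurry β) := hβ.continuous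
  set B' : ℝ := Bν + 1 with hB'def
  set βd : ℝ → ℝ → ℝ := fun x ν => fderiv ℝ (Function.uncurry β) (x, ν) (0, 1) with hβddef
  have hdβ : ∀ x ν, HasDerivAt (fun ν' => β x ν') (βd x ν) ν := by
    intro x ν
    have h1 : HasDerivAt (fun ν' : ℝ => ((x, ν') : ℝ × ℝ)) ((0 : ℝ), (1 : ℝ)) ν :=
      (hasDerivAt_const ν x).prodMk (hasDerivAt_id ν)
    have h2 := ((hβ.differentiable (by norm_num)) (x, ν)).hasFDerivAt
    exact h2.comp_hasDerivAt ν h1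
  have hβdc : Continuous (Function.uncurry βd) :=
    (hβ.continuous_fderiv (by norm_num)).clm_apply continuous_const
  have hβdB : ∀ x ∈ Icc (0:ℝ) 1, ∀ ν ∈ Icc (-Bν) Bν, |βd x ν| ≤ αν := by
    intro x hx ν hν
    have h := hβν x hx ν hν
    rwa [(hdβ x ν).deriv] at h
  -- compactness constants
  have hcpt : IsCompact ((Icc (0:ℝ) 1) ×ˢ (Icc (-B') B')) := isCompact_Icc.prod isCompact_Icc
  obtain ⟨A₀, hA₀⟩ := hcpt.exists_bound_of_continuousOn hβc.continuousOn
  set A : ℝ := max A₀ 1 with hAdef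
  have hA1 : (1:ℝ) ≤ A := le_max_right _ _
  have hA0 : (0:ℝ) ≤ A := by linarith
  have hA : ∀ x ∈ Icc (0:ℝ) 1, ∀ ν ∈ Icc (-B') B', |β x ν| ≤ A := by
    intro x hx ν hν
    have := hA₀ (x, ν) ⟨hx, hν⟩
    rw [Real.norm_eq_abs] at this
    exact this.trans (le_max_left _ _)
  obtain ⟨A₁, hA₁⟩ := hcpt.exists_bound_of_continuousOn hβdc.continuousOn
  set A' : ℝ := max A₁ 0 with hA'def
  have hA'0 : (0:ℝ) ≤ A' := le_max_right _ _
  have hA' : ∀ x ∈ Icc (0:ℝ) 1, ∀ ν ∈ Icc (-B') B', |βd x ν| ≤ A' := by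
    intro x hx ν hν
    have := hA₁ (x, ν) ⟨hx, hν⟩
    rw [Real.norm_eq_abs] at this
    exact this.trans (le_max_left _ _)
  have hcM : Continuous (fun p : ℝ × ℝ => Kseq β 0 p.1 p.2 - k p.1 p.2) :=
    (contK hβc 0).sub hkc
  obtain ⟨M₀, hM₀⟩ := hcpt.exists_bound_of_continuousOn hcM.continuousOn
  set M : ℝ := max M₀ 0 with hMdef
  have hM0 : (0:ℝ) ≤ M := le_max_right _ _
  have hM : ∀ x ∈ Icc (0:ℝ) 1, ∀ ν ∈ Icc (-B') B', |Kseq β 0 x ν - k x ν| ≤ M := by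
    intro x hx ν hν
    have := hM₀ (x, ν) ⟨hx, hν⟩
    rw [Real.norm_eq_abs] at this
    exact this.trans (le_max_left _ _)
  have hcM₁ : Continuous (fun p : ℝ × ℝ => Kseq β 1 p.1 p.2 - Kseq β 0 p.1 p.2) :=
    (contK hβc 1).sub (contK hβc 0)
  obtain ⟨M₂, hM₂⟩ := hcpt.exists_bound_of_continuousOn hcM₁.continuousOn
  set M₁ : ℝ := max M₂ 0 with hM₁def
  have hM₁0 : (0:ℝ) ≤ M₁ := le_max_right _ _
  have hM₁ : ∀ x ∈ Icc (0:ℝ) 1, ∀ ν ∈ Icc (-B') B', |Kseq β 1 x ν - Kseq β 0 x ν| ≤ M₁ := by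
    intro x hx ν hν
    have := hM₂ (x, ν) ⟨hx, hν⟩
    rw [Real.norm_eq_abs] at this
    exact this.trans (le_max_left _ _)
  have hcC : Continuous (fun p : ℝ × ℝ => Dseq β βd 1 p.1 p.2 - Dseq β βd 0 p.1 p.2) :=
    (contD hβc hβdc 1).sub (contD hβc hβdc 0)
  obtain ⟨C₁, hC₁⟩ := hcpt.exists_bound_of_continuousOn hcC.continuousOn
  set C : ℝ := max (max C₁ 0) (A' * M₁) with hCdef
  have hC0 : (0:ℝ) ≤ C := le_trans (le_max_right C₁ 0) (le_max_left _ _)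
  have hCb : ∀ x ∈ Icc (0:ℝ) 1, ∀ ν ∈ Icc (-B') B', |Dseq β βd 1 x ν - Dseq β βd 0 x ν| ≤ C := by
    intro x hx ν hν
    have := hC₁ (x, ν) ⟨hx, hν⟩
    rw [Real.norm_eq_abs] at this
    exact this.trans (le_trans (le_max_left C₁ 0) (le_max_left _ _))
  have hA'M₁C : A' * M₁ ≤ C * A := by
    have h1 : A' * M₁ ≤ C := le_max_right _ _
    nlinarith
  -- continuity of slices
  have contKy : ∀ n (νv : ℝ), Continuous (fun y => Kseq β n y νv) := fun n νv =>
    (contK hβc n).comp (continuous_id.prodMk continuous_const)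
  have contDy : ∀ n (νv : ℝ), Continuous (fun y => Dseq β βd n y νv) := fun n νv =>
    (contD hβc hβdc n).comp (continuous_id.prodMk continuous_const)
  have contky : ∀ νv : ℝ, Continuous (fun y => k y νv) := fun νv =>
    hkc.comp (continuous_id.prodMk continuous_const)
  have contβy : ∀ (x νv : ℝ), Continuous (fun y => β (x - y) νv) := fun x νv =>
    hβc.comp ((continuous_const.sub continuous_id).prodMk continuous_const)
  have contβdy : ∀ (x νv : ℝ), Continuous (fun y => βd (x - y) νv) := fun x νv =>
    hβdc.comp ((continuous_const.sub continuous_id).prodMk continuous_const)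
  have hfacpos : ∀ n : ℕ, (0:ℝ) < (n.factorial : ℝ) := fun n => by
    exact_mod_cast n.factorial_pos
  -- E1
  have E1 : ∀ n, ∀ x ∈ Icc (0:ℝ) 1, ∀ ν ∈ Icc (-B') B',
      |Kseq β n x ν - k x ν| ≤ M * A ^ n * x ^ n / (n.factorial : ℝ) := by
    intro n
    induction n with
    | zero =>
      intro x hx ν hν
      simpa using hM x hx ν hν
    | succ n ih =>
      intro x hx ν hν
      have h1 : IntervalIntegrable (fun y => β (x - y) ν * Kseq β n y ν) volume 0 x :=
        ((contβy x ν).mul (contKy n ν)).intervalIntegrable 0 x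
      have h2 : IntervalIntegrable (fun y => β (x - y) ν * k y ν) volume 0 x :=
        ((contβy x ν).mul (contky ν)).intervalIntegrable 0 x
      have hid : Kseq β (n+1) x ν - k x ν
          = ∫ y in (0:ℝ)..x, β (x - y) ν * (Kseq β n y ν - k y ν) := by
        have heq : (fun y => β (x - y) ν * (Kseq β n y ν - k y ν))
            = fun y => β (x - y) ν * Kseq β n y ν - β (x - y) ν * k y ν := by
          funext y; ring
        rw [hk x hx ν, heq, intervalIntegral.integral_sub h1 h2]
        simp only [Kseq]
        ring
      rw [hid]
      have hcnn : (0:ℝ) ≤ A * (M * A ^ n / (n.factorial : ℝ)) :=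
        mul_nonneg hA0 (div_nonneg (mul_nonneg hM0 (pow_nonneg hA0 n)) (hfacpos n).le)
      have hb : ∀ y ∈ Ioc (0:ℝ) x, |β (x - y) ν * (Kseq β n y ν - k y ν)|
          ≤ (A * (M * A ^ n / (n.factorial : ℝ))) * y ^ n := by
        intro y hy
        have hy1 : y ∈ Icc (0:ℝ) 1 := ⟨hy.1.le, hy.2.trans hx.2⟩
        have hxy : x - y ∈ Icc (0:ℝ) 1 := ⟨by linarith [hy.2], by linarith [hy.1, hx.2]⟩
        rw [abs_mul]
        calc |β (x - y) ν| * |Kseq β n y ν - k y ν|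
            ≤ A * (M * A ^ n * y ^ n / (n.factorial : ℝ)) :=
              mul_le_mul (hA _ hxy ν hν) (ih y hy1 ν hν) (abs_nonneg _) hA0
          _ = (A * (M * A ^ n / (n.factorial : ℝ))) * y ^ n := by ring
      have hfint : IntervalIntegrable (fun y => β (x - y) ν * (Kseq β n y ν - k y ν)) volume 0 x :=
        ((contβy x ν).mul ((contKy n ν).sub (contky ν))).intervalIntegrable 0 x
      have hsb := step_bound hx.1 hfint hcnn n hb
      refine hsb.trans (le_of_eq ?_)
      rw [Nat.factorial_succ]
      push_cast
      have hf0 : ((n.factorial : ℝ)) ≠ 0 := (hfacpos n).ne'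
      field_simp
      ring
  -- E2
  have E2 : ∀ n, ∀ x ∈ Icc (0:ℝ) 1, ∀ ν ∈ Icc (-B') B',
      |Kseq β (n+1) x ν - Kseq β n x ν| ≤ M₁ * A ^ n * x ^ n / (n.factorial : ℝ) := by
    intro n
    induction n with
    | zero =>
      intro x hx ν hν
      simpa using hM₁ x hx ν hν
    | succ n ih =>
      intro x hx ν hν
      have h1 : IntervalIntegrable (fun y => β (x - y) ν * Kseq β (n+1) y ν) volume 0 x :=
        ((contβy x ν).mul (contKy (n+1) ν)).intervalIntegrable 0 x
      have h2 : IntervalIntegrable (fun y => β (x - y) ν * Kseq β n y ν) volume 0 x :=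
        ((contβy x ν).mul (contKy n ν)).intervalIntegrable 0 x
      have hid : Kseq β (n+2) x ν - Kseq β (n+1) x ν
          = ∫ y in (0:ℝ)..x, β (x - y) ν * (Kseq β (n+1) y ν - Kseq β n y ν) := by
        have heq : (fun y => β (x - y) ν * (Kseq β (n+1) y ν - Kseq β n y ν))
            = fun y => β (x - y) ν * Kseq β (n+1) y ν - β (x - y) ν * Kseq β n y ν := by
          funext y; ring
        rw [heq, intervalIntegral.integral_sub h1 h2]
        simp only [Kseq]
        ring
      rw [hid]
      have hcnn : (0:ℝ) ≤ A * (M₁ * A ^ n / (n.factorial : ℝ)) :=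
        mul_nonneg hA0 (div_nonneg (mul_nonneg hM₁0 (pow_nonneg hA0 n)) (hfacpos n).le)
      have hb : ∀ y ∈ Ioc (0:ℝ) x, |β (x - y) ν * (Kseq β (n+1) y ν - Kseq β n y ν)|
          ≤ (A * (M₁ * A ^ n / (n.factorial : ℝ))) * y ^ n := by
        intro y hy
        have hy1 : y ∈ Icc (0:ℝ) 1 := ⟨hy.1.le, hy.2.trans hx.2⟩
        have hxy : x - y ∈ Icc (0:ℝ) 1 := ⟨by linarith [hy.2], by linarith [hy.1, hx.2]⟩
        rw [abs_mul]
        calc |β (x - y) ν| * |Kseq β (n+1) y ν - Kseq β n y ν|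
            ≤ A * (M₁ * A ^ n * y ^ n / (n.factorial : ℝ)) :=
              mul_le_mul (hA _ hxy ν hν) (ih y hy1 ν hν) (abs_nonneg _) hA0
          _ = (A * (M₁ * A ^ n / (n.factorial : ℝ))) * y ^ n := by ring
      have hfint : IntervalIntegrable
          (fun y => β (x - y) ν * (Kseq β (n+1) y ν - Kseq β n y ν)) volume 0 x :=
        ((contβy x ν).mul ((contKy (n+1) ν).sub (contKy n ν))).intervalIntegrable 0 x
      have hsb := step_bound hx.1 hfint hcnn n hb
      refine hsb.trans (le_of_eq ?_)
      rw [Nat.factorial_succ]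
      push_cast
      have hf0 : ((n.factorial : ℝ)) ≠ 0 := (hfacpos n).ne'
      field_simp
      ring
  -- E3
  have E3 : ∀ n, ∀ x ∈ Icc (0:ℝ) 1, ∀ ν ∈ Icc (-B') B',
      |Dseq β βd (n+1) x ν - Dseq β βd n x ν|
        ≤ C * ((n : ℝ) + 1) * A ^ n * x ^ n / (n.factorial : ℝ) := by
    intro n
    induction n with
    | zero =>
      intro x hx ν hν
      simpa using hCb x hx ν hν
    | succ n ih =>
      intro x hx ν hν
      have h1 : IntervalIntegrable (fun y => βd (x - y) ν * Kseq β (n+1) y ν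
          + β (x - y) ν * Dseq β βd (n+1) y ν) volume 0 x :=
        (((contβdy x ν).mul (contKy (n+1) ν)).add
          ((contβy x ν).mul (contDy (n+1) ν))).intervalIntegrable 0 x
      have h2 : IntervalIntegrable (fun y => βd (x - y) ν * Kseq β n y ν
          + β (x - y) ν * Dseq β βd n y ν) volume 0 x :=
        (((contβdy x ν).mul (contKy n ν)).add
          ((contβy x ν).mul (contDy n ν))).intervalIntegrable 0 x
      have hid : Dseq β βd (n+2) x ν - Dseq β βd (n+1) x ν
          = ∫ y in (0:ℝ)..x, (βd (x - y) ν * (Kseq β (n+1) y ν - Kseq β n y ν)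
              + β (x - y) ν * (Dseq β βd (n+1) y ν - Dseq β βd n y ν)) := by
        have heq : (fun y => βd (x - y) ν * (Kseq β (n+1) y ν - Kseq β n y ν)
              + β (x - y) ν * (Dseq β βd (n+1) y ν - Dseq β βd n y ν))
            = fun y => (βd (x - y) ν * Kseq β (n+1) y ν + β (x - y) ν * Dseq β βd (n+1) y ν)
              - (βd (x - y) ν * Kseq β n y ν + β (x - y) ν * Dseq β βd n y ν) := by
          funext y; ring
        rw [heq, intervalIntegral.integral_sub h1 h2]
        simp only [Dseq]
        ring
      rw [hid]
      set c : ℝ := (A' * M₁ + A * (C * ((n : ℝ) + 1))) * A ^ n / (n.factorial : ℝ) with hcdef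
      have hcnn : (0:ℝ) ≤ c := by
        apply div_nonneg _ (hfacpos n).le
        apply mul_nonneg _ (pow_nonneg hA0 n)
        have h6 : (0:ℝ) ≤ A' * M₁ := mul_nonneg hA'0 hM₁0
        have h7 : (0:ℝ) ≤ A * (C * ((n : ℝ) + 1)) :=
          mul_nonneg hA0 (mul_nonneg hC0 (by positivity))
        linarith
      have hb : ∀ y ∈ Ioc (0:ℝ) x, |βd (x - y) ν * (Kseq β (n+1) y ν - Kseq β n y ν)
            + β (x - y) ν * (Dseq β βd (n+1) y ν - Dseq β βd n y ν)| ≤ c * y ^ n := by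
        intro y hy
        have hy1 : y ∈ Icc (0:ℝ) 1 := ⟨hy.1.le, hy.2.trans hx.2⟩
        have hxy : x - y ∈ Icc (0:ℝ) 1 := ⟨by linarith [hy.2], by linarith [hy.1, hx.2]⟩
        calc |βd (x - y) ν * (Kseq β (n+1) y ν - Kseq β n y ν)
              + β (x - y) ν * (Dseq β βd (n+1) y ν - Dseq β βd n y ν)|
            ≤ |βd (x - y) ν| * |Kseq β (n+1) y ν - Kseq β n y ν|
              + |β (x - y) ν| * |Dseq β βd (n+1) y ν - Dseq β βd n y ν| := by
              refine (abs_add_le _ _).trans ?_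
              rw [abs_mul, abs_mul]
          _ ≤ A' * (M₁ * A ^ n * y ^ n / (n.factorial : ℝ))
              + A * (C * ((n : ℝ) + 1) * A ^ n * y ^ n / (n.factorial : ℝ)) :=
              add_le_add
                (mul_le_mul (hA' _ hxy ν hν) (E2 n y hy1 ν hν) (abs_nonneg _) hA'0)
                (mul_le_mul (hA _ hxy ν hν) (ih y hy1 ν hν) (abs_nonneg _) hA0)
          _ = c * y ^ n := by rw [hcdef]; ring
      have hfint : IntervalIntegrable
          (fun y => βd (x - y) ν * (Kseq β (n+1) y ν - Kseq β n y ν)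
            + β (x - y) ν * (Dseq β βd (n+1) y ν - Dseq β βd n y ν)) volume 0 x :=
        (((contβdy x ν).mul ((contKy (n+1) ν).sub (contKy n ν))).add
          ((contβy x ν).mul ((contDy (n+1) ν).sub (contDy n ν)))).intervalIntegrable 0 x
      have hsb := step_bound hx.1 hfint hcnn n hb
      refine hsb.trans ?_
      have hxp : (0:ℝ) ≤ x ^ (n+1) := pow_nonneg hx.1 (n+1)
      have hnum : (A' * M₁ + A * (C * ((n : ℝ) + 1))) * A ^ n
          ≤ C * ((n : ℝ) + 2) * A ^ (n+1) := by
        have h5 : A' * M₁ + A * (C * ((n : ℝ) + 1)) ≤ C * A * ((n : ℝ) + 2) := by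
          have h6 : (0:ℝ) ≤ (n : ℝ) + 1 := by positivity
          nlinarith
        calc (A' * M₁ + A * (C * ((n : ℝ) + 1))) * A ^ n
            ≤ (C * A * ((n : ℝ) + 2)) * A ^ n :=
              mul_le_mul_of_nonneg_right h5 (pow_nonneg hA0 n)
          _ = C * ((n : ℝ) + 2) * A ^ (n+1) := by ring
      have hfin : c * x ^ (n+1) / ((n : ℝ) + 1)
          ≤ C * ((n : ℝ) + 2) * A ^ (n+1) * x ^ (n+1) / ((n+1).factorial : ℝ) := by
        rw [hcdef, Nat.factorial_succ]
        push_cast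
        rw [div_le_div_iff₀ (by positivity) (by positivity)]
        calc (A' * M₁ + A * (C * ((n:ℝ) + 1))) * A ^ n / (n.factorial : ℝ) * x ^ (n+1)
              * ((((n:ℝ) + 1)) * (n.factorial : ℝ))
            = ((A' * M₁ + A * (C * ((n:ℝ) + 1))) * A ^ n) * x ^ (n+1) * ((n:ℝ) + 1) := by
              have hf0 : ((n.factorial : ℝ)) ≠ 0 := (hfacpos n).ne'
              field_simp
          _ ≤ (C * ((n:ℝ) + 2) * A ^ (n+1)) * x ^ (n+1) * ((n:ℝ) + 1) := by
              apply mul_le_mul_of_nonneg_right _ (by positivity)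
              exact mul_le_mul_of_nonneg_right hnum hxp
          _ = C * ((n:ℝ) + 2) * A ^ (n+1) * x ^ (n+1) * ((n:ℝ) + 1) := by ring
      refine hfin.trans (le_of_eq ?_)
      push_cast
      ring
  -- summable tail
  set u : ℕ → ℝ := fun n => C * ((n : ℝ) + 1) * A ^ n / (n.factorial : ℝ) with hudef
  have hu0 : ∀ n, 0 ≤ u n := by
    intro n
    rw [hudef]
    have : (0:ℝ) ≤ (n : ℝ) + 1 := by positivity
    apply div_nonneg _ (hfacpos n).le
    apply mul_nonneg _ (pow_nonneg hA0 n)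
    nlinarith
  have husum : Summable u := by
    apply Summable.of_nonneg_of_le hu0 (fun n => ?_)
      ((Real.summable_pow_div_factorial (2*A)).mul_left C)
    show C * ((n:ℝ)+1) * A ^ n / (n.factorial : ℝ) ≤ C * ((2*A) ^ n / (n.factorial : ℝ))
    have h2p : ((n:ℝ)+1) ≤ 2 ^ n := by
      have h1 : n + 1 ≤ 2 ^ n := Nat.lt_two_pow_self
      exact_mod_cast h1
    have hnum : C * ((n:ℝ)+1) * A ^ n ≤ C * 2 ^ n * A ^ n :=
      mul_le_mul_of_nonneg_right (mul_le_mul_of_nonneg_left h2p hC0) (pow_nonneg hA0 n)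
    calc C * ((n:ℝ)+1) * A ^ n / (n.factorial : ℝ)
        ≤ C * 2 ^ n * A ^ n / (n.factorial : ℝ) := by
          rw [div_le_div_iff₀ (hfacpos n) (hfacpos n)]
          exact mul_le_mul_of_nonneg_right hnum (hfacpos n).le
      _ = C * ((2*A) ^ n / (n.factorial : ℝ)) := by rw [mul_pow]; ring
  set rem : ℕ → ℝ := fun n => ∑' i, u (i + n) with hremdef
  have hrem_eq : ∀ n, rem n = (∑' i, u i) - ∑ i ∈ Finset.range n, u i := by
    intro n
    have h2 := Summable.sum_add_tsum_nat_add (f := u) n husum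
    rw [hremdef]
    linarith
  have hrem0 : Tendsto rem atTop (𝓝 0) := by
    have h3 : Tendsto (fun n => (∑' i, u i) - ∑ i ∈ Finset.range n, u i) atTop
        (𝓝 ((∑' i, u i) - (∑' i, u i))) := tendsto_const_nhds.sub husum.hasSum.tendsto_sum_nat
    rw [sub_self] at h3
    exact h3.congr (fun n => (hrem_eq n).symm)
  -- definition of kν
  set kν : ℝ → ℝ → ℝ := fun x ν =>
    Dseq β βd 0 x ν + ∑' j, (Dseq β βd (j+1) x ν - Dseq β βd j x ν) with hkνdef
  have key : ∀ x ∈ Icc (0:ℝ) 1, ∀ ν ∈ Icc (-B') B', ∀ n,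
      |kν x ν - Dseq β βd n x ν| ≤ rem n := by
    intro x hx ν hν n
    set d : ℕ → ℝ := fun j => Dseq β βd (j+1) x ν - Dseq β βd j x ν with hddef
    have hdu : ∀ j, |d j| ≤ u j := by
      intro j
      refine (E3 j x hx ν hν).trans ?_
      show C * ((j:ℝ)+1) * A ^ j * x ^ j / (j.factorial : ℝ)
          ≤ C * ((j:ℝ)+1) * A ^ j / (j.factorial : ℝ)
      have hx1 : x ^ j ≤ 1 := pow_le_one₀ hx.1 hx.2
      have hnn : (0:ℝ) ≤ C * ((j:ℝ)+1) * A ^ j := by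
        have : (0:ℝ) ≤ (j : ℝ) + 1 := by positivity
        apply mul_nonneg _ (pow_nonneg hA0 j)
        nlinarith
      rw [div_le_div_iff₀ (hfacpos j) (hfacpos j)]
      calc C * ((j:ℝ)+1) * A ^ j * x ^ j * (j.factorial : ℝ)
          ≤ C * ((j:ℝ)+1) * A ^ j * 1 * (j.factorial : ℝ) := by
            apply mul_le_mul_of_nonneg_right _ (hfacpos j).le
            exact mul_le_mul_of_nonneg_left hx1 hnn
        _ = C * ((j:ℝ)+1) * A ^ j * (j.factorial : ℝ) := by ring
    have hsum_d : Summable d :=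
      Summable.of_norm_bounded husum (fun j => by rw [Real.norm_eq_abs]; exact hdu j)
    have hDn : Dseq β βd n x ν = Dseq β βd 0 x ν + ∑ j ∈ Finset.range n, d j := by
      rw [hddef, Finset.sum_range_sub (fun j => Dseq β βd j x ν)]
      ring
    have htel : kν x ν - Dseq β βd n x ν = ∑' j, d (j + n) := by
      have h4 := Summable.sum_add_tsum_nat_add (f := d) n hsum_d
      rw [hkνdef]
      show (Dseq β βd 0 x ν + ∑' j, d j) - Dseq β βd n x ν = ∑' j, d (j + n)
      rw [hDn]
      linarith
    rw [htel]
    have hsu : Summable (fun j => u (j + n)) := (summable_nat_add_iff n).mpr husum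
    have hsdn : Summable (fun j => ‖d (j + n)‖) := by
      apply Summable.of_nonneg_of_le (fun _ => norm_nonneg _)
        (fun j => by rw [Real.norm_eq_abs]; exact hdu _) hsu
    rw [← Real.norm_eq_abs]
    calc ‖∑' j, d (j + n)‖ ≤ ∑' j, ‖d (j + n)‖ := norm_tsum_le_tsum_norm hsdn
      _ ≤ ∑' j, u (j + n) :=
        Summable.tsum_le_tsum (fun j => by rw [Real.norm_eq_abs]; exact hdu _) hsdn hsu
      _ = rem n := rfl
  have hsub : (Icc (0:ℝ) 1 ×ˢ Icc (-Bν) Bν) ⊆ (Icc (0:ℝ) 1 ×ˢ Icc (-B') B') := by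
    intro p hp
    refine ⟨hp.1, ⟨?_, ?_⟩⟩
    · have h9 := hp.2.1; rw [hB'def]; linarith
    · have h9 := hp.2.2; rw [hB'def]; linarith
  refine ⟨kν, ?_, ?_⟩
  · -- continuity
    have hTU : TendstoUniformlyOn (fun (n : ℕ) (p : ℝ × ℝ) => Dseq β βd n p.1 p.2)
        (fun p : ℝ × ℝ => kν p.1 p.2) atTop ((Icc (0:ℝ) 1) ×ˢ (Icc (-B') B')) := by
      rw [Metric.tendstoUniformlyOn_iff]
      intro ε hε
      filter_upwards [hrem0.eventually (gt_mem_nhds hε)] with n hn p hp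
      rw [Real.dist_eq]
      exact lt_of_le_of_lt (key p.1 hp.1 p.2 hp.2 n) hn
    have hco : ContinuousOn (fun p : ℝ × ℝ => kν p.1 p.2)
        ((Icc (0:ℝ) 1) ×ˢ (Icc (-B') B')) := by
      refine hTU.continuousOn (Filter.Eventually.of_forall (fun n => ?_)).frequently
      exact (contD hβc hβdc n).continuousOn
    exact hco.mono hsub
  · intro x hx ν hν
    have hνB' : ν ∈ Icc (-B') B' := (hsub (show ((x, ν) : ℝ × ℝ) ∈ _ from ⟨hx, hν⟩)).2
    have htd : Tendsto (fun n => Dseq β βd n x ν) atTop (𝓝 (kν x ν)) := by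
      rw [← tendsto_sub_nhds_zero_iff]
      apply squeeze_zero_norm (fun n => ?_) hrem0
      rw [Real.norm_eq_abs, abs_sub_comm]
      exact key x hx ν hνB' n
    constructor
    · have hmem : ν ∈ Ioo (-B') B' := by
        constructor
        · have h9 := hν.1; rw [hB'def]; linarith
        · have h9 := hν.2; rw [hB'def]; linarith
      refine hasDerivAt_of_tendstoUniformlyOn (l := atTop) (f := fun n ν' => Kseq β n x ν')
        (f' := fun n ν' => Dseq β βd n x ν') (g := fun ν' => k x ν') (g' := fun ν' => kν x ν')
        isOpen_Ioo ?_ ?_ ?_ hmem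
      · rw [Metric.tendstoUniformlyOn_iff]
        intro ε hε
        filter_upwards [hrem0.eventually (gt_mem_nhds hε)] with n hn ν' hν'
        rw [Real.dist_eq]
        exact lt_of_le_of_lt (key x hx ν' (Ioo_subset_Icc_self hν') n) hn
      · exact Filter.Eventually.of_forall (fun n ν' _ => hasDerivK hβc hβdc hdβ n x ν')
      · intro ν' hν'
        have hν'B : ν' ∈ Icc (-B') B' := Ioo_subset_Icc_self hν'
        rw [← tendsto_sub_nhds_zero_iff]
        refine squeeze_zero_norm (a := fun n => M * (A ^ n / (n.factorial : ℝ))) (fun n => ?_) ?_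
        · rw [Real.norm_eq_abs]
          refine (E1 n x hx ν' hν'B).trans ?_
          have hx1 : x ^ n ≤ 1 := pow_le_one₀ hx.1 hx.2
          have hnn : (0:ℝ) ≤ M * A ^ n := mul_nonneg hM0 (pow_nonneg hA0 n)
          calc M * A ^ n * x ^ n / (n.factorial : ℝ)
              ≤ M * A ^ n * 1 / (n.factorial : ℝ) := by
                rw [div_le_div_iff₀ (hfacpos n) (hfacpos n)]
                apply mul_le_mul_of_nonneg_right _ (hfacpos n).le
                exact mul_le_mul_of_nonneg_left hx1 hnn
            _ = M * (A ^ n / (n.factorial : ℝ)) := by ring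
        · have := (Real.summable_pow_div_factorial A).tendsto_atTop_zero.const_mul M
          simpa using this
    · have habs : Tendsto (fun n => |Dseq β βd n x ν|) atTop (𝓝 (|kν x ν|)) := htd.abs
      refine le_of_tendsto habs (Filter.Eventually.of_forall (fun n => ?_))
      exact boundD hαν hβc hβdc hβB hβdB n x hx ν hν
end

section
/- Suppose k̂ : [0,1] × [-B_ν, B_ν] → ℝ is continuous and satisfies |k̂ - k| ≤ ε pointwise, where k solves k = -β + β*k with ‖β‖_∞ ≤ B_β. Let l̂ solve l̂(x,ν) = k̂(x,ν) + ∫₀ˣ k̂(x-y,ν) l̂(y,ν) dy. Then l̂ satisfies l̂ = -β + δ + δ*l̂ where δ := k̂ + β - β*k̂ satisfies ‖δ‖_∞ ≤ ε(1 + B_β), and consequently |l̂(x,ν)| ≤ (B_β + (1+B_β)ε) e^{(1+B_β)ε x} for all (x,ν) ∈ [0,1] × [-B_ν, B_ν]. -/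
open intervalIntegral Real Set MeasureTheory

lemma fubini_triangle (f : ℝ → ℝ → ℝ) (hf : Continuous (Function.uncurry f)) {x : ℝ}
    (hx : 0 ≤ x) :
    (∫ y in (0:ℝ)..x, ∫ z in (0:ℝ)..y, f y z) = ∫ z in (0:ℝ)..x, ∫ y in z..x, f y z := by
  set S : Set (ℝ × ℝ) := {p : ℝ × ℝ | p.2 ≤ p.1} with hSdef
  have hS : MeasurableSet S := measurableSet_le measurable_snd measurable_fst
  set g : ℝ × ℝ → ℝ := S.indicator (Function.uncurry f) with hgdef
  have hgint : Integrable (Function.uncurry fun y z => g (y, z))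
      ((volume.restrict (Ioc (0:ℝ) x)).prod (volume.restrict (Ioc (0:ℝ) x))) := by
    rw [Measure.prod_restrict]
    have h1 : IntegrableOn (Function.uncurry f) (Icc (0:ℝ) x ×ˢ Icc (0:ℝ) x) volume :=
      hf.locallyIntegrable.integrableOn_isCompact (isCompact_Icc.prod isCompact_Icc)
    have h2 : IntegrableOn (Function.uncurry f) (Ioc (0:ℝ) x ×ˢ Ioc (0:ℝ) x) volume :=
      h1.mono_set (Set.prod_mono Ioc_subset_Icc_self Ioc_subset_Icc_self)
    exact h2.indicator hS
  have key1 : ∀ y ∈ Ioc (0:ℝ) x, (∫ z in Ioc (0:ℝ) x, g (y, z)) = ∫ z in (0:ℝ)..y, f y z := by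
    intro y hy
    have : (fun z => g (y, z)) = (Iic y).indicator (f y) := by
      funext z
      simp only [hgdef, Set.indicator, hSdef, mem_setOf_eq, mem_Iic, Function.uncurry]
    rw [this, setIntegral_indicator measurableSet_Iic, Set.Ioc_inter_Iic,
      min_eq_right hy.2, intervalIntegral.integral_of_le hy.1.le]
  have key2 : ∀ z ∈ Ioc (0:ℝ) x, (∫ y in Ioc (0:ℝ) x, g (y, z)) = ∫ y in z..x, f y z := by
    intro z hz
    have : (fun y => g (y, z)) = (Ici z).indicator (fun y => f y z) := by
      funext y
      simp only [hgdef, Set.indicator, hSdef, mem_setOf_eq, mem_Ici, Function.uncurry]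
    rw [this, setIntegral_indicator measurableSet_Ici]
    have hset : Ioc (0:ℝ) x ∩ Ici z = Icc z x := by
      ext y
      simp only [mem_inter_iff, mem_Ioc, mem_Ici, mem_Icc]
      constructor
      · rintro ⟨⟨_, h2⟩, h3⟩; exact ⟨h3, h2⟩
      · rintro ⟨h1, h2⟩; exact ⟨⟨lt_of_lt_of_le hz.1 h1, h2⟩, h1⟩
    rw [hset, MeasureTheory.integral_Icc_eq_integral_Ioc,
      ← intervalIntegral.integral_of_le hz.2]
  rw [intervalIntegral.integral_of_le hx, intervalIntegral.integral_of_le hx]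
  rw [← MeasureTheory.setIntegral_congr_fun measurableSet_Ioc key1,
      ← MeasureTheory.setIntegral_congr_fun measurableSet_Ioc key2]
  exact MeasureTheory.integral_integral_swap hgint

theorem stmt_8 (Bν Bβ ε : ℝ) (hBν : 0 < Bν) (hBβ : 0 < Bβ) (hε : 0 < ε)
    (β k kh lh δ : ℝ → ℝ → ℝ)
    (hβc : Continuous (Function.uncurry β))
    (hkc : Continuous (Function.uncurry k))
    (hkhc : Continuous (Function.uncurry kh))
    (hlhc : Continuous (Function.uncurry lh))
    (hβB : ∀ x ∈ Icc (0:ℝ) 1, ∀ ν ∈ Icc (-Bν) Bν, |β x ν| ≤ Bβ)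
    (hk : ∀ x ∈ Icc (0:ℝ) 1, ∀ ν ∈ Icc (-Bν) Bν,
      k x ν = -β x ν + ∫ y in (0:ℝ)..x, β (x - y) ν * k y ν)
    (hkh : ∀ x ∈ Icc (0:ℝ) 1, ∀ ν ∈ Icc (-Bν) Bν, |kh x ν - k x ν| ≤ ε)
    (hlh : ∀ x ∈ Icc (0:ℝ) 1, ∀ ν ∈ Icc (-Bν) Bν,
      lh x ν = kh x ν + ∫ y in (0:ℝ)..x, kh (x - y) ν * lh y ν)
    (hδ : ∀ x ν, δ x ν = kh x ν + β x ν - ∫ y in (0:ℝ)..x, β (x - y) ν * kh y ν) :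
    (∀ x ∈ Icc (0:ℝ) 1, ∀ ν ∈ Icc (-Bν) Bν, |δ x ν| ≤ ε * (1 + Bβ)) ∧
    (∀ x ∈ Icc (0:ℝ) 1, ∀ ν ∈ Icc (-Bν) Bν,
      lh x ν = -β x ν + δ x ν + ∫ y in (0:ℝ)..x, δ (x - y) ν * lh y ν) ∧
    (∀ x ∈ Icc (0:ℝ) 1, ∀ ν ∈ Icc (-Bν) Bν,
      |lh x ν| ≤ (Bβ + (1 + Bβ) * ε) * Real.exp ((1 + Bβ) * ε * x)) := by
  -- continuity helpers
  have c1 : ∀ (F : ℝ → ℝ → ℝ), Continuous (Function.uncurry F) → ∀ ν : ℝ,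
      Continuous fun y => F y ν := fun F hF ν =>
    hF.comp (continuous_id.prodMk continuous_const)
  have c2 : ∀ (F : ℝ → ℝ → ℝ), Continuous (Function.uncurry F) → ∀ (c ν : ℝ),
      Continuous fun y => F (c - y) ν := fun F hF c ν =>
    hF.comp ((continuous_const.sub continuous_id).prodMk continuous_const)
  -- Part 1
  have part1 : ∀ x ∈ Icc (0:ℝ) 1, ∀ ν ∈ Icc (-Bν) Bν, |δ x ν| ≤ ε * (1 + Bβ) := by
    intro x hx ν hν
    have hδ' : δ x ν = (kh x ν - k x ν)
        - ∫ y in (0:ℝ)..x, β (x - y) ν * (kh y ν - k y ν) := by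
      have hsplit : (∫ y in (0:ℝ)..x, β (x - y) ν * (kh y ν - k y ν))
          = (∫ y in (0:ℝ)..x, β (x - y) ν * kh y ν)
            - ∫ y in (0:ℝ)..x, β (x - y) ν * k y ν := by
        rw [← intervalIntegral.integral_sub (f := fun y => β (x - y) ν * kh y ν)
          (g := fun y => β (x - y) ν * k y ν)
          (((c2 β hβc x ν).mul (c1 kh hkhc ν)).intervalIntegrable _ _)
          (((c2 β hβc x ν).mul (c1 k hkc ν)).intervalIntegrable _ _)]
        congr 1; funext y; ring
      have hkx := hk x hx ν hν
      rw [hδ, hsplit]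
      linarith
    rw [hδ']
    have hbnd : |∫ y in (0:ℝ)..x, β (x - y) ν * (kh y ν - k y ν)| ≤ Bβ * ε * |x - 0| := by
      rw [← Real.norm_eq_abs (∫ y in (0:ℝ)..x, β (x - y) ν * (kh y ν - k y ν))]
      apply intervalIntegral.norm_integral_le_of_norm_le_const
      intro y hy
      rw [Set.uIoc_of_le hx.1] at hy
      have hy1 : y ∈ Icc (0:ℝ) 1 := ⟨hy.1.le, hy.2.trans hx.2⟩
      have hxy : x - y ∈ Icc (0:ℝ) 1 := ⟨by linarith [hy.2], by linarith [hy.1, hx.2]⟩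
      rw [Real.norm_eq_abs, abs_mul]
      exact mul_le_mul (hβB _ hxy ν hν) (hkh y hy1 ν hν) (abs_nonneg _) hBβ.le
    have h1 : |kh x ν - k x ν| ≤ ε := hkh x hx ν hν
    have h2 : |x - 0| ≤ 1 := by rw [sub_zero, abs_of_nonneg hx.1]; exact hx.2
    calc |kh x ν - k x ν - ∫ y in (0:ℝ)..x, β (x - y) ν * (kh y ν - k y ν)|
        ≤ |kh x ν - k x ν| + |∫ y in (0:ℝ)..x, β (x - y) ν * (kh y ν - k y ν)| :=
          abs_sub _ _
      _ ≤ ε + Bβ * ε * 1 := by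
          refine add_le_add h1 (hbnd.trans ?_)
          nlinarith [mul_le_mul_of_nonneg_left h2 (mul_nonneg hBβ.le hε.le)]
      _ = ε * (1 + Bβ) := by ring
  -- Part 2
  have part2 : ∀ x ∈ Icc (0:ℝ) 1, ∀ ν ∈ Icc (-Bν) Bν,
      lh x ν = -β x ν + δ x ν + ∫ y in (0:ℝ)..x, δ (x - y) ν * lh y ν := by
    intro x hx ν hν
    set v : ℝ → ℝ := fun s => ∫ t in (0:ℝ)..s, β (s - t) ν * kh t ν with hvdef
    have cv : Continuous v := by
      apply intervalIntegral.continuous_parametric_intervalIntegral_of_continuous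
        (f := fun s t => β (s - t) ν * kh t ν) (μ := volume) ?_ continuous_id
      exact ((hβc.comp (((continuous_fst.sub continuous_snd)).prodMk continuous_const)).mul
        (hkhc.comp (continuous_snd.prodMk continuous_const)))
    have hδv : ∀ s, δ s ν = kh s ν + β s ν - v s := fun s => hδ s ν
    have hmem : ∀ y ∈ Set.uIcc (0:ℝ) x, y ∈ Icc (0:ℝ) 1 := by
      intro y hy
      rw [Set.uIcc_of_le hx.1] at hy
      exact ⟨hy.1, hy.2.trans hx.2⟩
    -- I2 = v x + I3
    have hI2 : (∫ y in (0:ℝ)..x, β (x - y) ν * lh y ν)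
        = v x + ∫ y in (0:ℝ)..x, v (x - y) * lh y ν := by
      have step1 : (∫ y in (0:ℝ)..x, β (x - y) ν * lh y ν)
          = ∫ y in (0:ℝ)..x, (β (x - y) ν * kh y ν
              + ∫ z in (0:ℝ)..y, β (x - y) ν * (kh (y - z) ν * lh z ν)) := by
        apply intervalIntegral.integral_congr
        intro y hy
        show β (x - y) ν * lh y ν = β (x - y) ν * kh y ν
            + ∫ z in (0:ℝ)..y, β (x - y) ν * (kh (y - z) ν * lh z ν)
        rw [hlh y (hmem y hy) ν hν, mul_add, intervalIntegral.integral_const_mul]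
      have cw : Continuous fun y => ∫ z in (0:ℝ)..y, β (x - y) ν * (kh (y - z) ν * lh z ν) := by
        apply intervalIntegral.continuous_parametric_intervalIntegral_of_continuous
          (f := fun y z => β (x - y) ν * (kh (y - z) ν * lh z ν)) (μ := volume) ?_ continuous_id
        exact (hβc.comp ((continuous_const.sub continuous_fst).prodMk continuous_const)).mul
          (((hkhc.comp ((continuous_fst.sub continuous_snd).prodMk continuous_const))).mul
            (hlhc.comp (continuous_snd.prodMk continuous_const)))
      rw [step1, intervalIntegral.integral_add (f := fun y => β (x - y) ν * kh y ν)
        (g := fun y => ∫ z in (0:ℝ)..y, β (x - y) ν * (kh (y - z) ν * lh z ν))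
        (((c2 β hβc x ν).mul (c1 kh hkhc ν)).intervalIntegrable _ _)
        (cw.intervalIntegrable _ _)]
      have hvx : (∫ y in (0:ℝ)..x, β (x - y) ν * kh y ν) = v x := by
        rw [hvdef]
      rw [hvx]
      congr 1
      rw [fubini_triangle (fun y z => β (x - y) ν * (kh (y - z) ν * lh z ν))
        ((hβc.comp ((continuous_const.sub continuous_fst).prodMk continuous_const)).mul
          (((hkhc.comp ((continuous_fst.sub continuous_snd).prodMk continuous_const))).mul
            (hlhc.comp (continuous_snd.prodMk continuous_const)))) hx.1]
      apply intervalIntegral.integral_congr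
      intro z hz
      show (∫ y in z..x, β (x - y) ν * (kh (y - z) ν * lh z ν)) = v (x - z) * lh z ν
      have e1 : (fun y => β (x - y) ν * (kh (y - z) ν * lh z ν))
          = fun y => ((fun t => β (x - z - t) ν * kh t ν) (y - z)) * lh z ν := by
        funext y
        have h : x - z - (y - z) = x - y := by ring
        simp only [h]; ring
      rw [e1, intervalIntegral.integral_mul_const,
        intervalIntegral.integral_comp_sub_right (fun t => β (x - z - t) ν * kh t ν) z,
        sub_self, hvdef]
    -- main computation
    have hsplit : (∫ y in (0:ℝ)..x, δ (x - y) ν * lh y ν)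
        = (∫ y in (0:ℝ)..x, kh (x - y) ν * lh y ν)
          + (∫ y in (0:ℝ)..x, β (x - y) ν * lh y ν)
          - ∫ y in (0:ℝ)..x, v (x - y) * lh y ν := by
      have e : (fun y => δ (x - y) ν * lh y ν)
          = fun y => (kh (x - y) ν * lh y ν + β (x - y) ν * lh y ν) - v (x - y) * lh y ν := by
        funext y; rw [hδv (x - y)]; ring
      have cvx : Continuous fun y : ℝ => v (x - y) :=
        cv.comp (continuous_const.sub continuous_id)
      rw [e, intervalIntegral.integral_sub
          (f := fun y => kh (x - y) ν * lh y ν + β (x - y) ν * lh y ν)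
          (g := fun y => v (x - y) * lh y ν)
          ((((c2 kh hkhc x ν).mul (c1 lh hlhc ν)).add
            ((c2 β hβc x ν).mul (c1 lh hlhc ν))).intervalIntegrable _ _)
          ((cvx.mul (c1 lh hlhc ν)).intervalIntegrable _ _),
        intervalIntegral.integral_add (f := fun y => kh (x - y) ν * lh y ν)
          (g := fun y => β (x - y) ν * lh y ν)
          (((c2 kh hkhc x ν).mul (c1 lh hlhc ν)).intervalIntegrable _ _)
          (((c2 β hβc x ν).mul (c1 lh hlhc ν)).intervalIntegrable _ _)]
    rw [hlh x hx ν hν, hδv x, hsplit, hI2]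
    ring
  refine ⟨part1, part2, ?_⟩
  -- Part 3
  intro x hx ν hν
  set K : ℝ := (1 + Bβ) * ε with hKdef
  have hK : 0 < K := by positivity
  set A : ℝ := Bβ + (1 + Bβ) * ε with hAdef
  have hA : 0 < A := by positivity
  set ψ : ℝ → ℝ := fun s => ∫ t in (0:ℝ)..s, |lh t ν| with hψdef
  have clha : Continuous fun t => |lh t ν| := (c1 lh hlhc ν).abs
  have hψd : ∀ s, HasDerivAt ψ (|lh s ν|) s := fun s =>
    intervalIntegral.integral_hasDerivAt_right (clha.intervalIntegrable _ _)
      (clha.stronglyMeasurableAtFilter _ _) clha.continuousAt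
  have hψc : Continuous ψ := by
    rw [continuous_iff_continuousAt]; exact fun s => (hψd s).continuousAt
  have hψ0 : ∀ s, 0 ≤ s → 0 ≤ ψ s := fun s hs =>
    intervalIntegral.integral_nonneg hs fun t _ => abs_nonneg _
  have hbound : ∀ s ∈ Icc (0:ℝ) 1, |lh s ν| ≤ A + K * ψ s := by
    intro s hs
    rw [part2 s hs ν hν]
    have hb1 : |β s ν| ≤ Bβ := hβB s hs ν hν
    have hKe : ε * (1 + Bβ) = K := by rw [hKdef]; ring
    have hb2 : |δ s ν| ≤ K := hKe ▸ part1 s hs ν hν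
    have hb3 : |∫ y in (0:ℝ)..s, δ (s - y) ν * lh y ν| ≤ K * ψ s := by
      have hle : ‖∫ y in (0:ℝ)..s, δ (s - y) ν * lh y ν‖
          ≤ abs (∫ y in (0:ℝ)..s, K * |lh y ν|) := by
        refine (intervalIntegral.norm_integral_le_of_norm_le hs.1 ?_ ?_).trans (le_abs_self _)
        · filter_upwards with y hy
          have hsy : s - y ∈ Icc (0:ℝ) 1 := ⟨by linarith [hy.2], by linarith [hy.1, hs.2]⟩
          rw [Real.norm_eq_abs, abs_mul]
          exact mul_le_mul_of_nonneg_right (hKe ▸ part1 (s - y) hsy ν hν) (abs_nonneg _)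
        · exact (continuous_const.mul clha).intervalIntegrable _ _
      rw [Real.norm_eq_abs] at hle
      refine hle.trans ?_
      rw [intervalIntegral.integral_const_mul, abs_of_nonneg]
      exact mul_nonneg hK.le (hψ0 s hs.1)
    calc |(-β s ν + δ s ν + ∫ y in (0:ℝ)..s, δ (s - y) ν * lh y ν)|
        ≤ |(-β s ν + δ s ν)| + |∫ y in (0:ℝ)..s, δ (s - y) ν * lh y ν| := abs_add_le _ _
      _ ≤ (|β s ν| + |δ s ν|) + K * ψ s := by
          refine add_le_add ((abs_add_le _ _).trans ?_) hb3
          rw [abs_neg]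
      _ ≤ A + K * ψ s := by rw [hAdef, hKdef]; linarith
  have hgron := norm_le_gronwallBound_of_norm_deriv_right_le (f := ψ)
    (f' := fun s => |lh s ν|) (a := 0) (b := 1) (δ := 0) (K := K) (ε := A)
    hψc.continuousOn (fun s _ => (hψd s).hasDerivWithinAt) (by simp [hψdef]) ?_
  · have hψx : ψ x ≤ gronwallBound 0 K A x := by
      have := hgron x hx
      rwa [sub_zero, Real.norm_eq_abs, abs_of_nonneg (hψ0 x hx.1)] at this
    have hgb : gronwallBound 0 K A x = A / K * (Real.exp (K * x) - 1) := by
      rw [gronwallBound_of_K_ne_0 hK.ne']; simp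
    have hfin : |lh x ν| ≤ A + K * ψ x := hbound x hx
    have : A + K * ψ x ≤ A * Real.exp (K * x) := by
      have h1 : K * ψ x ≤ K * (A / K * (Real.exp (K * x) - 1)) := by
        apply mul_le_mul_of_nonneg_left _ hK.le
        rw [← hgb]; exact hψx
      have h2 : K * (A / K * (Real.exp (K * x) - 1)) = A * Real.exp (K * x) - A := by
        field_simp
      have h3 : K * ψ x ≤ A * Real.exp (K * x) - A := le_of_le_of_eq h1 h2
      clear_value K A
      linarith
    exact hfin.trans this
  · intro s hsIco
    have hs : s ∈ Icc (0:ℝ) 1 := ⟨hsIco.1, hsIco.2.le⟩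
    rw [Real.norm_eq_abs, Real.norm_eq_abs, abs_abs, abs_of_nonneg (hψ0 s hs.1)]
    linarith [hbound s hs]
end

section
/- Let k : [0,1] × [-B_ν, B_ν] → ℝ satisfy |k| ≤ k̄ := B_β e^{B_β} pointwise, and let l solve l(x,ν) = k(x,ν) + ∫₀ˣ k(x-y,ν) l(y,ν) dy. Then |l(x,ν)| ≤ k̄ e^{k̄} for all (x,ν) ∈ [0,1] × [-B_ν, B_ν]. -/
/-!
Fix `ν`. The Volterra equation and `|k| ≤ k̄` give `|l x| ≤ k̄ + k̄ ∫₀ˣ |l|`, since the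
convolution only evaluates `k` at `x - y ∈ [0, x]`. Grönwall's inequality in integral form
then yields `|l x| ≤ k̄ e^{k̄ x} ≤ k̄ e^{k̄}` on `[0, 1]`.
-/

open intervalIntegral Real Set

theorem mul_gronwallBound_zero (K ε x : ℝ) :
    K * gronwallBound 0 K ε x = ε * (exp (K * x) - 1) := by
  rcases eq_or_ne K 0 with rfl | hK
  · simp [gronwallBound_K0]
  · rw [gronwallBound_of_K_ne_0 hK]
    field_simp
    ring

/-- Grönwall's inequality in integral form. -/
theorem le_mul_exp_of_le_add_mul_integral {u : ℝ → ℝ} {C K a b : ℝ} (hu : Continuous u)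
    (hK : 0 ≤ K) (h : ∀ t ∈ Icc a b, u t ≤ C + K * ∫ s in a..t, u s) :
    ∀ t ∈ Icc a b, u t ≤ C * exp (K * (t - a)) := by
  set F : ℝ → ℝ := fun t => ∫ s in a..t, u s
  have hF : ∀ t, HasDerivAt F (u t) t := fun t =>
    (hu.integral_hasStrictDerivAt a t).hasDerivAt
  have hFc : Continuous F := continuous_iff_continuousAt.2 fun t => (hF t).continuousAt
  have hF_le : ∀ t ∈ Icc a b, F t ≤ gronwallBound 0 K C (t - a) :=
    le_gronwallBound_of_liminf_deriv_right_le hFc.continuousOn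
      (fun t _ _ hr => (hF t).hasDerivWithinAt.liminf_right_slope_le hr)
      (by simp [F]) (fun t ht => by linarith [h t (Ico_subset_Icc_self ht)])
  intro t ht
  calc u t ≤ C + K * F t := h t ht
    _ ≤ C + K * gronwallBound 0 K C (t - a) := by gcongr; exact hF_le t ht
    _ = C * exp (K * (t - a)) := by rw [mul_gronwallBound_zero]; ring

theorem abs_le_add_mul_integral_abs_of_eq_add_convolution {k l : ℝ → ℝ} {K b : ℝ}
    (hlc : Continuous l) (hk : ∀ x ∈ Icc 0 b, |k x| ≤ K)
    (heq : ∀ x ∈ Icc 0 b, l x = k x + ∫ y in (0:ℝ)..x, k (x - y) * l y) :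
    ∀ x ∈ Icc 0 b, |l x| ≤ K + K * ∫ y in (0:ℝ)..x, |l y| := by
  intro x hx
  have hconv : |∫ y in (0:ℝ)..x, k (x - y) * l y| ≤ ∫ y in (0:ℝ)..x, K * |l y| :=
    norm_integral_le_of_norm_le hx.1
      (Filter.Eventually.of_forall fun y hy => by
        rw [Real.norm_eq_abs, abs_mul]
        exact mul_le_mul_of_nonneg_right
          (hk (x - y) ⟨by linarith [hy.2], by linarith [hy.1, hx.2]⟩) (abs_nonneg _))
      ((continuous_const.mul hlc.abs).intervalIntegrable 0 x)
  calc |l x| = |k x + ∫ y in (0:ℝ)..x, k (x - y) * l y| := by rw [← heq x hx]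
    _ ≤ |k x| + |∫ y in (0:ℝ)..x, k (x - y) * l y| := abs_add_le _ _
    _ ≤ K + K * ∫ y in (0:ℝ)..x, |l y| := by
      rw [← integral_const_mul]
      exact add_le_add (hk x hx) hconv

theorem abs_le_mul_exp_of_eq_add_convolution {k l : ℝ → ℝ} {K b : ℝ}
    (hlc : Continuous l) (hK : 0 ≤ K) (hk : ∀ x ∈ Icc 0 b, |k x| ≤ K)
    (heq : ∀ x ∈ Icc 0 b, l x = k x + ∫ y in (0:ℝ)..x, k (x - y) * l y) :
    ∀ x ∈ Icc 0 b, |l x| ≤ K * exp (K * x) := by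
  intro x hx
  simpa using le_mul_exp_of_le_add_mul_integral hlc.abs hK
    (abs_le_add_mul_integral_abs_of_eq_add_convolution hlc hk heq) x hx

theorem stmt_9_general (Bν Bβ : ℝ)
    (k l : ℝ → ℝ → ℝ)
    (hlc : Continuous (Function.uncurry l))
    (hkB : ∀ x ∈ Icc (0:ℝ) 1, ∀ ν ∈ Icc (-Bν) Bν,
      |k x ν| ≤ Bβ * Real.exp Bβ)
    (hl : ∀ x ∈ Icc (0:ℝ) 1, ∀ ν ∈ Icc (-Bν) Bν,
      l x ν = k x ν + ∫ y in (0:ℝ)..x, k (x - y) ν * l y ν) :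
    ∀ x ∈ Icc (0:ℝ) 1, ∀ ν ∈ Icc (-Bν) Bν,
      |l x ν| ≤ (Bβ * Real.exp Bβ) * Real.exp (Bβ * Real.exp Bβ) := by
  intro x hx ν hν
  set kb := Bβ * Real.exp Bβ
  have hkb : 0 ≤ kb := (abs_nonneg _).trans (hkB x hx ν hν)
  have hlν : Continuous fun y => l y ν := hlc.comp (continuous_id.prodMk continuous_const)
  calc |l x ν| ≤ kb * exp (kb * x) :=
        abs_le_mul_exp_of_eq_add_convolution hlν hkb (fun y hy => hkB y hy ν hν)
          (fun y hy => hl y hy ν hν) x hx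
    _ ≤ kb * exp kb := by
      gcongr
      exact mul_le_of_le_one_right hkb hx.2

theorem stmt_9 (Bν Bβ : ℝ) (hBν : 0 < Bν) (hBβ : 0 < Bβ)
    (k l : ℝ → ℝ → ℝ)
    (hkc : Continuous (Function.uncurry k))
    (hlc : Continuous (Function.uncurry l))
    (hkB : ∀ x ∈ Icc (0:ℝ) 1, ∀ ν ∈ Icc (-Bν) Bν,
      |k x ν| ≤ Bβ * Real.exp Bβ)
    (hl : ∀ x ∈ Icc (0:ℝ) 1, ∀ ν ∈ Icc (-Bν) Bν,
      l x ν = k x ν + ∫ y in (0:ℝ)..x, k (x - y) ν * l y ν) :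
    ∀ x ∈ Icc (0:ℝ) 1, ∀ ν ∈ Icc (-Bν) Bν,
      |l x ν| ≤ (Bβ * Real.exp Bβ) * Real.exp (Bβ * Real.exp Bβ) :=
  stmt_9_general Bν Bβ k l hlc hkB hl
end

section
/- Let k, l : [0,1] × [-B_ν, B_ν] → ℝ be continuous with |k| ≤ k̄, |l| ≤ l̄, |k_ν| ≤ k̄_ν pointwise, where l solves l = k + k*l. If l is differentiable in ν, then l_ν satisfies l_ν(x,ν) = k_ν(x,ν) + ∫₀ˣ [k_ν(x-y,ν)l(y,ν) + k(x-y,ν)l_ν(y,ν)]dy and |l_ν(x,ν)| ≤ k̄_ν (1 + l̄) e^{k̄} for all (x,ν) ∈ [0,1] × [-B_ν, B_ν]. -/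
open intervalIntegral Real Set

theorem stmt_10 (Bν kbar lbar kνbar : ℝ) (hBν : 0 < Bν)
    (hkbar : 0 < kbar) (hlbar : 0 < lbar) (hkνbar : 0 < kνbar)
    (k l kν lν : ℝ → ℝ → ℝ)
    (hkc : Continuous (Function.uncurry k))
    (hlc : Continuous (Function.uncurry l))
    (hkνc : Continuous (Function.uncurry kν))
    (hlνc : Continuous (Function.uncurry lν))
    (hkB : ∀ x ∈ Icc (0:ℝ) 1, ∀ ν ∈ Icc (-Bν) Bν, |k x ν| ≤ kbar)
    (hlB : ∀ x ∈ Icc (0:ℝ) 1, ∀ ν ∈ Icc (-Bν) Bν, |l x ν| ≤ lbar)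
    (hkνB : ∀ x ∈ Icc (0:ℝ) 1, ∀ ν ∈ Icc (-Bν) Bν, |kν x ν| ≤ kνbar)
    (hl : ∀ x ∈ Icc (0:ℝ) 1, ∀ ν : ℝ,
      l x ν = k x ν + ∫ y in (0:ℝ)..x, k (x - y) ν * l y ν)
    (hkν : ∀ x ∈ Icc (0:ℝ) 1, ∀ ν : ℝ,
      HasDerivAt (fun ν' => k x ν') (kν x ν) ν)
    (hlν : ∀ x ∈ Icc (0:ℝ) 1, ∀ ν : ℝ,
      HasDerivAt (fun ν' => l x ν') (lν x ν) ν) :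
    ∀ x ∈ Icc (0:ℝ) 1, ∀ ν ∈ Icc (-Bν) Bν,
      (lν x ν = kν x ν + ∫ y in (0:ℝ)..x,
        (kν (x - y) ν * l y ν + k (x - y) ν * lν y ν)) ∧
      |lν x ν| ≤ kνbar * (1 + lbar) * Real.exp kbar := by
  -- Step 1: the differentiated integral equation, for every x ∈ [0,1] and every ν
  have eq1 : ∀ x ∈ Icc (0:ℝ) 1, ∀ ν : ℝ,
      lν x ν = kν x ν + ∫ y in (0:ℝ)..x,
        (kν (x - y) ν * l y ν + k (x - y) ν * lν y ν) := by
    intro x hx ν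
    have hx0 := hx.1
    have hx1 := hx.2
    have hGc : Continuous fun p : ℝ × ℝ =>
        kν (x - p.2) p.1 * l p.2 p.1 + k (x - p.2) p.1 * lν p.2 p.1 := by
      exact ((hkνc.comp ((continuous_const.sub continuous_snd).prodMk continuous_fst)).mul
          (hlc.comp (continuous_snd.prodMk continuous_fst))).add
        ((hkc.comp ((continuous_const.sub continuous_snd).prodMk continuous_fst)).mul
          (hlνc.comp (continuous_snd.prodMk continuous_fst)))
    obtain ⟨C, hC⟩ := ((isCompact_closedBall ν 1).prod isCompact_Icc).exists_bound_of_continuousOn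
      (s := Metric.closedBall ν 1 ×ˢ Icc (0:ℝ) 1) hGc.continuousOn
    have hFc : ∀ ν' : ℝ, Continuous fun y => k (x - y) ν' * l y ν' := fun ν' =>
      (hkc.comp ((continuous_const.sub continuous_id).prodMk continuous_const)).mul
        (hlc.comp (continuous_id.prodMk continuous_const))
    have hF'c : Continuous fun y => kν (x - y) ν * l y ν + k (x - y) ν * lν y ν :=
      (hGc.comp (continuous_const.prodMk continuous_id) : _)
    have key := intervalIntegral.hasDerivAt_integral_of_dominated_loc_of_deriv_le
      (𝕜 := ℝ) (μ := MeasureTheory.volume) (a := 0) (b := x)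
      (F := fun ν' y => k (x - y) ν' * l y ν')
      (F' := fun ν' y => kν (x - y) ν' * l y ν' + k (x - y) ν' * lν y ν')
      (x₀ := ν) (bound := fun _ => C) (Metric.ball_mem_nhds ν one_pos)
      (Filter.Eventually.of_forall fun ν' => (hFc ν').aestronglyMeasurable)
      ((hFc ν).intervalIntegrable 0 x)
      hF'c.aestronglyMeasurable
      ?_ (intervalIntegrable_const) ?_
    · have hL := hlν x hx ν
      rw [show (fun ν' => l x ν') = fun ν' =>
        k x ν' + ∫ y in (0:ℝ)..x, k (x - y) ν' * l y ν' from funext fun ν' => hl x hx ν'] at hL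
      exact hL.unique ((hkν x hx ν).add key.2)
    · refine Filter.Eventually.of_forall fun t ht ν' hν' => ?_
      rw [Set.uIoc_of_le hx0] at ht
      have h1 : x - t ∈ Icc (0:ℝ) 1 := ⟨by linarith [ht.2], by linarith [ht.1]⟩
      have h2 : t ∈ Icc (0:ℝ) 1 := ⟨ht.1.le, ht.2.trans hx1⟩
      exact hC (ν', t) ⟨Metric.ball_subset_closedBall hν', h2⟩
    · refine Filter.Eventually.of_forall fun t ht ν' hν' => ?_
      rw [Set.uIoc_of_le hx0] at ht
      have h1 : x - t ∈ Icc (0:ℝ) 1 := ⟨by linarith [ht.2], by linarith [ht.1]⟩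
      have h2 : t ∈ Icc (0:ℝ) 1 := ⟨ht.1.le, ht.2.trans hx1⟩
      exact (hkν (x - t) h1 ν').mul (hlν t h2 ν')
  -- Step 2: the bound
  intro x hx ν hν
  refine ⟨eq1 x hx ν, ?_⟩
  set a := kνbar * (1 + lbar) with ha
  have ha0 : 0 ≤ a := by positivity
  have hlνcont : Continuous fun y => |lν y ν| :=
    (hlνc.comp (continuous_id.prodMk continuous_const)).abs
  set F : ℝ → ℝ := fun t => ∫ y in (0:ℝ)..t, |lν y ν| with hF
  have hFderiv : ∀ t : ℝ, HasDerivAt F (|lν t ν|) t := fun t =>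
    intervalIntegral.integral_hasDerivAt_right (hlνcont.intervalIntegrable 0 t)
      hlνcont.aestronglyMeasurable.stronglyMeasurableAtFilter hlνcont.continuousAt
  have hFnonneg : ∀ t ∈ Icc (0:ℝ) 1, 0 ≤ F t := fun t ht =>
    intervalIntegral.integral_nonneg ht.1 fun y _ => abs_nonneg _
  -- pointwise integral inequality
  have claim : ∀ t ∈ Icc (0:ℝ) 1, |lν t ν| ≤ a + kbar * F t := by
    intro t ht
    have h1 : |lν t ν| ≤ |kν t ν| + |∫ y in (0:ℝ)..t,
        (kν (t - y) ν * l y ν + k (t - y) ν * lν y ν)| := by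
      rw [eq1 t ht ν]; exact abs_add_le _ _
    have hcont1 : Continuous fun y => kν (t - y) ν * l y ν + k (t - y) ν * lν y ν :=
      ((hkνc.comp ((continuous_const.sub continuous_id).prodMk continuous_const)).mul
          (hlc.comp (continuous_id.prodMk continuous_const))).add
        ((hkc.comp ((continuous_const.sub continuous_id).prodMk continuous_const)).mul
          (hlνc.comp (continuous_id.prodMk continuous_const)))
    have h2 : |∫ y in (0:ℝ)..t, (kν (t - y) ν * l y ν + k (t - y) ν * lν y ν)|
        ≤ ∫ y in (0:ℝ)..t, |kν (t - y) ν * l y ν + k (t - y) ν * lν y ν| :=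
      intervalIntegral.abs_integral_le_integral_abs ht.1
    have h3 : (∫ y in (0:ℝ)..t, |kν (t - y) ν * l y ν + k (t - y) ν * lν y ν|)
        ≤ ∫ y in (0:ℝ)..t, (kνbar * lbar + kbar * |lν y ν|) := by
      apply intervalIntegral.integral_mono_on ht.1
        (hcont1.abs.intervalIntegrable 0 t)
        ((continuous_const.add (continuous_const.mul hlνcont)).intervalIntegrable 0 t)
      intro y hy
      have hy1 : y ∈ Icc (0:ℝ) 1 := ⟨hy.1, hy.2.trans ht.2⟩
      have hty : t - y ∈ Icc (0:ℝ) 1 := ⟨by linarith [hy.2], by linarith [hy.1, ht.2]⟩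
      calc |kν (t - y) ν * l y ν + k (t - y) ν * lν y ν|
          ≤ |kν (t - y) ν * l y ν| + |k (t - y) ν * lν y ν| := abs_add_le _ _
        _ ≤ kνbar * lbar + kbar * |lν y ν| := by
            rw [abs_mul, abs_mul]
            have e1 := mul_le_mul (hkνB _ hty ν hν) (hlB _ hy1 ν hν) (abs_nonneg _) hkνbar.le
            have e2 := mul_le_mul_of_nonneg_right (hkB _ hty ν hν) (abs_nonneg (lν y ν))
            linarith
    have h4 : (∫ y in (0:ℝ)..t, (kνbar * lbar + kbar * |lν y ν|))
        = kνbar * lbar * t + kbar * F t := by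
      rw [intervalIntegral.integral_add (f := fun _ => kνbar * lbar) (g := fun y => kbar * |lν y ν|)
        (intervalIntegrable_const)
        ((continuous_const.mul hlνcont).intervalIntegrable 0 t),
        intervalIntegral.integral_const, intervalIntegral.integral_const_mul]
      simp [hF, mul_comm]
    have h5 : kνbar * lbar * t ≤ kνbar * lbar := by
      have h0 : (0:ℝ) ≤ kνbar * lbar := by positivity
      nlinarith [ht.2]
    have h6 := hkνB t ht ν hν
    have h23 := h2.trans h3
    nlinarith [h1, h23, h4, h5, h6, abs_le.1 h6]
  -- Grönwall
  have gron := norm_le_gronwallBound_of_norm_deriv_right_le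
    (f := F) (f' := fun t => |lν t ν|) (δ := 0) (K := kbar) (ε := a) (a := 0) (b := x)
    (fun t _ => (hFderiv t).continuousAt.continuousWithinAt)
    (fun t _ => (hFderiv t).hasDerivWithinAt)
    (by simp [hF])
    ?_
  · have hx' : x ∈ Icc (0:ℝ) x := ⟨hx.1, le_refl x⟩
    have hFx := gron x hx'
    rw [sub_zero, Real.norm_eq_abs, abs_of_nonneg (hFnonneg x hx),
      gronwallBound_of_K_ne_0 hkbar.ne'] at hFx
    have h7 := claim x hx
    have h8 : a + kbar * F x ≤ a * Real.exp (kbar * x) := by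
      have : kbar * F x ≤ a * (Real.exp (kbar * x) - 1) := by
        have := mul_le_mul_of_nonneg_left hFx hkbar.le
        calc kbar * F x ≤ kbar * (0 * Real.exp (kbar * x) + a / kbar * (Real.exp (kbar * x) - 1)) := this
          _ = a * (Real.exp (kbar * x) - 1) := by field_simp; ring
      linarith
    have h9 : a * Real.exp (kbar * x) ≤ a * Real.exp kbar := by
      apply mul_le_mul_of_nonneg_left _ ha0
      exact Real.exp_le_exp.2 (by nlinarith [hx.1, hx.2])
    calc |lν x ν| ≤ a + kbar * F x := h7
      _ ≤ a * Real.exp (kbar * x) := h8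
      _ ≤ a * Real.exp kbar := h9
  · intro t ht
    have ht1 : t ∈ Icc (0:ℝ) 1 := ⟨ht.1, ht.2.le.trans hx.2⟩
    rw [Real.norm_eq_abs, Real.norm_eq_abs, abs_of_nonneg (hFnonneg t ht1),
      abs_abs]
    linarith [claim t ht1]
end

section
/- Let β₁, β₂ : [0,1] × [-B_ν,B_ν] → ℝ be C¹ with sup norms of β, β_ν bounded by B_β, B_{β_ν} respectively, and let k₁, k₂ be the corresponding Volterra kernel solutions of kᵢ = -βᵢ + βᵢ*kᵢ. Then there exists a constant A = A(B_β, B_{β_ν}) > 0 such that ‖∂_ν k₁ - ∂_ν k₂‖_∞ ≤ A e^{B_β} (‖β₁-β₂‖_∞ + ‖∂_ν β₁ - ∂_ν β₂‖_∞). -/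
open intervalIntegral Real Set

lemma absmul' {a b A B : ℝ} (ha : |a| ≤ A) (hb : |b| ≤ B) : |a * b| ≤ A * B := by
  rw [abs_mul]
  exact mul_le_mul ha hb (abs_nonneg _) (le_trans (abs_nonneg a) ha)

lemma mvt_abs' {g g' : ℝ → ℝ} (hg : ∀ t, HasDerivAt g (g' t) t) {s t C : ℝ}
    (hC : ∀ u ∈ Icc (min s t) (max s t), |g' u| ≤ C) :
    |g t - g s| ≤ C * |t - s| := by
  rcases le_total s t with h | h
  · have := norm_image_sub_le_of_norm_deriv_le_segment'
      (f := g) (f' := g') (a := s) (b := t)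
      (fun u _ => (hg u).hasDerivWithinAt)
      (fun u hu => by
        simpa [Real.norm_eq_abs] using
          hC u (by rw [min_eq_left h, max_eq_right h]; exact Ico_subset_Icc_self hu))
      t (right_mem_Icc.2 h)
    rw [abs_of_nonneg (sub_nonneg.2 h)]
    simpa [Real.norm_eq_abs] using this
  · have := norm_image_sub_le_of_norm_deriv_le_segment'
      (f := g) (f' := g') (a := t) (b := s)
      (fun u _ => (hg u).hasDerivWithinAt)
      (fun u hu => by
        simpa [Real.norm_eq_abs] using
          hC u (by rw [min_eq_right h, max_eq_left h]; exact Ico_subset_Icc_self hu))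
      s (right_mem_Icc.2 h)
    rw [abs_sub_comm, abs_sub_comm t s, abs_of_nonneg (sub_nonneg.2 h)]
    simpa [Real.norm_eq_abs] using this

lemma int_bd' {G f : ℝ → ℝ} (hG : Continuous G) (hf : Continuous f) {x c b : ℝ}
    (hx : x ∈ Icc (0:ℝ) 1) (hc : 0 ≤ c) (hb : 0 ≤ b)
    (hbd : ∀ y ∈ Icc 0 x, |G y| ≤ c + b * |f y|) :
    |∫ y in (0:ℝ)..x, G y| ≤ c + b * ∫ y in (0:ℝ)..x, |f y| := by
  have h0x : (0:ℝ) ≤ x := hx.1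
  have i1 : IntervalIntegrable (fun y => |G y|) MeasureTheory.volume 0 x :=
    (hG.abs).intervalIntegrable 0 x
  have i2 : IntervalIntegrable (fun y => c + b * |f y|) MeasureTheory.volume 0 x :=
    (continuous_const.add (continuous_const.mul hf.abs)).intervalIntegrable 0 x
  calc |∫ y in (0:ℝ)..x, G y| ≤ ∫ y in (0:ℝ)..x, |G y| := by
        simpa [Real.norm_eq_abs] using
          intervalIntegral.norm_integral_le_integral_norm (f := G)
            (μ := MeasureTheory.volume) (a := 0) (b := x) h0x
    _ ≤ ∫ y in (0:ℝ)..x, (c + b * |f y|) :=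
        intervalIntegral.integral_mono_on h0x i1 i2 hbd
    _ = c * x + b * ∫ y in (0:ℝ)..x, |f y| := by
        rw [intervalIntegral.integral_add (f := fun _ => c) (g := fun y => b * |f y|) intervalIntegrable_const
          ((continuous_const.mul hf.abs).intervalIntegrable 0 x),
          intervalIntegral.integral_const, intervalIntegral.integral_const_mul,
          sub_zero, smul_eq_mul]
        ring
    _ ≤ c + b * ∫ y in (0:ℝ)..x, |f y| := by nlinarith [hx.2]

lemma gron' {f : ℝ → ℝ} (hf : Continuous f) {a b : ℝ} (ha : 0 ≤ a) (hb : 0 < b)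
    (h : ∀ x ∈ Icc (0:ℝ) 1, |f x| ≤ a + b * ∫ y in (0:ℝ)..x, |f y|) :
    ∀ x ∈ Icc (0:ℝ) 1, |f x| ≤ a * Real.exp b := by
  set F : ℝ → ℝ := fun x => ∫ y in (0:ℝ)..x, |f y| with hF
  have hFd : ∀ x : ℝ, HasDerivAt F |f x| x := fun x =>
    (hf.abs.integral_hasStrictDerivAt 0 x).hasDerivAt
  have hFc : Continuous F := by
    rw [continuous_iff_continuousAt]; exact fun x => (hFd x).continuousAt
  have key : ∀ x ∈ Icc (0:ℝ) 1, ‖F x‖ ≤ gronwallBound 0 b a (x - 0) := by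
    apply norm_le_gronwallBound_of_norm_deriv_right_le (f' := fun x => |f x|)
      hFc.continuousOn (fun x _ => (hFd x).hasDerivWithinAt)
    · simp [hF]
    · intro x hx
      have hFnn : 0 ≤ F x := intervalIntegral.integral_nonneg hx.1 (fun y _ => abs_nonneg _)
      rw [Real.norm_eq_abs, Real.norm_eq_abs, abs_abs, abs_of_nonneg hFnn]
      have := h x (Ico_subset_Icc_self hx)
      linarith
  intro x hx
  have h2 := key x hx
  rw [Real.norm_eq_abs, gronwallBound_of_K_ne_0 (ne_of_gt hb)] at h2
  have hFnn : 0 ≤ F x := intervalIntegral.integral_nonneg hx.1 fun y _ => abs_nonneg _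
  rw [abs_of_nonneg hFnn, sub_zero] at h2
  have hexp : Real.exp (b * x) ≤ Real.exp b := by
    apply Real.exp_le_exp.mpr; nlinarith [hx.2]
  have h4 : b * F x ≤ a * (Real.exp (b * x) - 1) := by
    calc b * F x ≤ b * (0 * Real.exp (b * x) + a / b * (Real.exp (b * x) - 1)) :=
          mul_le_mul_of_nonneg_left h2 hb.le
      _ = a * (Real.exp (b * x) - 1) := by field_simp; ring
  have h3 := h x hx
  calc |f x| ≤ a + b * F x := h3
    _ ≤ a + a * (Real.exp (b * x) - 1) := by linarith
    _ = a * Real.exp (b * x) := by ring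
    _ ≤ a * Real.exp b := mul_le_mul_of_nonneg_left hexp ha

open intervalIntegral Real Set

theorem stmt_16 (Bν Bβ Bβν : ℝ) (hBν : 0 < Bν) (hBβ : 0 < Bβ) (hBβν : 0 < Bβν) :
    ∃ A : ℝ, 0 < A ∧
      ∀ (β₁ β₂ bν₁ bν₂ k₁ k₂ kν₁ kν₂ : ℝ → ℝ → ℝ) (D₁ D₂ : ℝ),
        Continuous (Function.uncurry β₁) → Continuous (Function.uncurry β₂) →
        (∀ x ν, HasDerivAt (fun ν' => β₁ x ν') (bν₁ x ν) ν) →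
        (∀ x ν, HasDerivAt (fun ν' => β₂ x ν') (bν₂ x ν) ν) →
        Continuous (Function.uncurry bν₁) → Continuous (Function.uncurry bν₂) →
        (∀ x ∈ Icc (0:ℝ) 1, ∀ ν ∈ Icc (-Bν) Bν,
          |β₁ x ν| ≤ Bβ ∧ |β₂ x ν| ≤ Bβ ∧ |bν₁ x ν| ≤ Bβν ∧ |bν₂ x ν| ≤ Bβν) →
        (∀ x ∈ Icc (0:ℝ) 1, ∀ ν : ℝ,
          k₁ x ν = -β₁ x ν + ∫ y in (0:ℝ)..x, β₁ (x - y) ν * k₁ y ν) →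
        (∀ x ∈ Icc (0:ℝ) 1, ∀ ν : ℝ,
          k₂ x ν = -β₂ x ν + ∫ y in (0:ℝ)..x, β₂ (x - y) ν * k₂ y ν) →
        Continuous (Function.uncurry k₁) → Continuous (Function.uncurry k₂) →
        (∀ x ∈ Icc (0:ℝ) 1, ∀ ν : ℝ,
          HasDerivAt (fun ν' => k₁ x ν') (kν₁ x ν) ν) →
        (∀ x ∈ Icc (0:ℝ) 1, ∀ ν : ℝ,
          HasDerivAt (fun ν' => k₂ x ν') (kν₂ x ν) ν) →
        (∀ x ∈ Icc (0:ℝ) 1, ∀ ν ∈ Icc (-Bν) Bν, |β₁ x ν - β₂ x ν| ≤ D₁) →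
        (∀ x ∈ Icc (0:ℝ) 1, ∀ ν ∈ Icc (-Bν) Bν, |bν₁ x ν - bν₂ x ν| ≤ D₂) →
        ∀ x ∈ Icc (0:ℝ) 1, ∀ ν ∈ Icc (-Bν) Bν,
          |kν₁ x ν - kν₂ x ν| ≤ A * Real.exp Bβ * (D₁ + D₂) := by
  set E := Real.exp Bβ with hE
  have hE1 : 1 ≤ E := Real.one_le_exp hBβ.le
  set Bk := Bβ * E with hBk
  have hBk0 : 0 < Bk := by positivity
  refine ⟨(1 + Bk) * (1 + 2 * Bβν * E), by positivity, ?_⟩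
  intro β₁ β₂ bν₁ bν₂ k₁ k₂ kν₁ kν₂ D₁ D₂ hβ₁c hβ₂c hb₁d hb₂d hb₁c hb₂c hbdd
    hk₁eq hk₂eq hk₁c hk₂c hkd₁ hkd₂ hD₁ hD₂
  have h01 : (0:ℝ) ∈ Icc (0:ℝ) 1 := ⟨le_refl _, zero_le_one⟩
  have h0ν : (0:ℝ) ∈ Icc (-Bν) Bν := ⟨by linarith, by linarith⟩
  have hD₁0 : 0 ≤ D₁ := le_trans (abs_nonneg _) (hD₁ 0 h01 0 h0ν)
  have hD₂0 : 0 ≤ D₂ := le_trans (abs_nonneg _) (hD₂ 0 h01 0 h0ν)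
  -- continuity helpers
  have ck₁ : ∀ ν, Continuous fun t => k₁ t ν := fun ν =>
    hk₁c.comp (continuous_id.prodMk continuous_const)
  have ck₂ : ∀ ν, Continuous fun t => k₂ t ν := fun ν =>
    hk₂c.comp (continuous_id.prodMk continuous_const)
  have cβ₁ : ∀ (a ν : ℝ), Continuous fun y => β₁ (a - y) ν := fun a ν =>
    hβ₁c.comp ((continuous_const.sub continuous_id).prodMk continuous_const)
  have cβ₂ : ∀ (a ν : ℝ), Continuous fun y => β₂ (a - y) ν := fun a ν =>
    hβ₂c.comp ((continuous_const.sub continuous_id).prodMk continuous_const)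
  -- membership helpers
  have memy : ∀ {x y : ℝ}, x ∈ Icc (0:ℝ) 1 → y ∈ Icc 0 x → y ∈ Icc (0:ℝ) 1 :=
    fun hx hy => ⟨hy.1, hy.2.trans hx.2⟩
  have memxy : ∀ {x y : ℝ}, x ∈ Icc (0:ℝ) 1 → y ∈ Icc 0 x → x - y ∈ Icc (0:ℝ) 1 :=
    fun hx hy => ⟨by linarith [hy.2], by linarith [hy.1, hx.2]⟩
  -- step (a): bound on k₁
  have hk₁b : ∀ ν ∈ Icc (-Bν) Bν, ∀ x ∈ Icc (0:ℝ) 1, |k₁ x ν| ≤ Bk := by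
    intro ν hν
    have := gron' (f := fun t => k₁ t ν) (ck₁ ν) hBβ.le hBβ ?_
    · exact this
    intro x hx
    beta_reduce
    rw [hk₁eq x hx ν]
    refine (abs_add_le _ _).trans ?_
    have h1 : |β₁ x ν| ≤ Bβ := (hbdd x hx ν hν).1
    have h2 := int_bd' (G := fun y => β₁ (x - y) ν * k₁ y ν) (f := fun t => k₁ t ν)
      ((cβ₁ x ν).mul (ck₁ ν)) (ck₁ ν) hx (le_refl 0) hBβ.le ?_
    · beta_reduce at h2; simpa using by linarith [h1, h2]
    intro y hy
    beta_reduce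
    rw [zero_add, abs_mul]
    exact mul_le_mul_of_nonneg_right ((hbdd _ (memxy hx hy) ν hν).1) (abs_nonneg _)
  have hk₂b : ∀ ν ∈ Icc (-Bν) Bν, ∀ x ∈ Icc (0:ℝ) 1, |k₂ x ν| ≤ Bk := by
    intro ν hν
    have := gron' (f := fun t => k₂ t ν) (ck₂ ν) hBβ.le hBβ ?_
    · exact this
    intro x hx
    beta_reduce
    rw [hk₂eq x hx ν]
    refine (abs_add_le _ _).trans ?_
    have h1 : |β₂ x ν| ≤ Bβ := (hbdd x hx ν hν).2.1
    have h2 := int_bd' (G := fun y => β₂ (x - y) ν * k₂ y ν) (f := fun t => k₂ t ν)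
      ((cβ₂ x ν).mul (ck₂ ν)) (ck₂ ν) hx (le_refl 0) hBβ.le ?_
    · beta_reduce at h2; simpa using by linarith [h1, h2]
    intro y hy
    beta_reduce
    rw [zero_add, abs_mul]
    exact mul_le_mul_of_nonneg_right ((hbdd _ (memxy hx hy) ν hν).2.1) (abs_nonneg _)
  set Dk := D₁ * (1 + Bk) * E with hDk
  -- step (c): bound on k₁ - k₂
  have hkdiff : ∀ ν ∈ Icc (-Bν) Bν, ∀ x ∈ Icc (0:ℝ) 1, |k₁ x ν - k₂ x ν| ≤ Dk := by
    intro ν hν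
    have key := gron' (f := fun t => k₁ t ν - k₂ t ν) ((ck₁ ν).sub (ck₂ ν))
      (a := D₁ * (1 + Bk)) (by positivity) hBβ ?_
    · intro x hx
      calc |k₁ x ν - k₂ x ν| ≤ D₁ * (1 + Bk) * Real.exp Bβ := key x hx
        _ = Dk := by rw [hDk, hE]
    intro x hx
    have hGsub : (∫ y in (0:ℝ)..x, β₁ (x - y) ν * k₁ y ν)
        - (∫ y in (0:ℝ)..x, β₂ (x - y) ν * k₂ y ν)
        = ∫ y in (0:ℝ)..x, (β₁ (x - y) ν * k₁ y ν - β₂ (x - y) ν * k₂ y ν) :=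
      (intervalIntegral.integral_sub (((cβ₁ x ν).mul (ck₁ ν)).intervalIntegrable 0 x)
        (((cβ₂ x ν).mul (ck₂ ν)).intervalIntegrable 0 x)).symm
    have heq : k₁ x ν - k₂ x ν = -(β₁ x ν - β₂ x ν)
        + ∫ y in (0:ℝ)..x, (β₁ (x - y) ν * k₁ y ν - β₂ (x - y) ν * k₂ y ν) := by
      rw [hk₁eq x hx ν, hk₂eq x hx ν, ← hGsub]; ring
    beta_reduce
    rw [heq]
    refine (abs_add_le _ _).trans ?_
    have h1 : |β₁ x ν - β₂ x ν| ≤ D₁ := hD₁ x hx ν hν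
    have h2 := int_bd' (G := fun y => β₁ (x - y) ν * k₁ y ν - β₂ (x - y) ν * k₂ y ν)
      (f := fun t => k₁ t ν - k₂ t ν)
      (c := D₁ * Bk) (b := Bβ)
      (((cβ₁ x ν).mul (ck₁ ν)).sub ((cβ₂ x ν).mul (ck₂ ν))) ((ck₁ ν).sub (ck₂ ν))
      hx (by positivity) hBβ.le ?_
    · beta_reduce at h2
      simpa using by linarith [h1, h2, abs_sub_comm (β₁ x ν) (β₂ x ν)]
    intro y hy
    beta_reduce
    have hy1 := memy hx hy
    have hxy := memxy hx hy
    have hsplit : β₁ (x - y) ν * k₁ y ν - β₂ (x - y) ν * k₂ y ν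
        = (β₁ (x - y) ν - β₂ (x - y) ν) * k₁ y ν
          + β₂ (x - y) ν * (k₁ y ν - k₂ y ν) := by ring
    rw [hsplit]
    refine (abs_add_le _ _).trans ?_
    have t1 := absmul' (hD₁ _ hxy ν hν) (hk₁b ν hν y hy1)
    have t2 : |β₂ (x - y) ν * (k₁ y ν - k₂ y ν)| ≤ Bβ * |k₁ y ν - k₂ y ν| := by
      rw [abs_mul]
      exact mul_le_mul_of_nonneg_right ((hbdd _ hxy ν hν).2.1) (abs_nonneg _)
    linarith
  set Cu := Bβν * (1 + Bk) * E with hCu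
  intro x hx ν hν
  have hsub : ∀ ν' ∈ Icc (-Bν) Bν, Icc (min ν ν') (max ν ν') ⊆ Icc (-Bν) Bν := by
    intro ν' hν' u hu
    exact ⟨le_trans (le_min hν.1 hν'.1) hu.1, le_trans hu.2 (max_le hν.2 hν'.2)⟩
  have hm1 : ∀ ν' ∈ Icc (-Bν) Bν, ∀ z ∈ Icc (0:ℝ) 1,
      |β₁ z ν' - β₁ z ν| ≤ Bβν * |ν' - ν| :=
    fun ν' hν' z hz =>
      mvt_abs' (hb₁d z) (fun u hu => (hbdd z hz u (hsub ν' hν' hu)).2.2.1)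
  have hm2 : ∀ ν' ∈ Icc (-Bν) Bν, ∀ z ∈ Icc (0:ℝ) 1,
      |β₂ z ν' - β₂ z ν| ≤ Bβν * |ν' - ν| :=
    fun ν' hν' z hz =>
      mvt_abs' (hb₂d z) (fun u hu => (hbdd z hz u (hsub ν' hν' hu)).2.2.2)
  have hm3 : ∀ ν' ∈ Icc (-Bν) Bν, ∀ z ∈ Icc (0:ℝ) 1,
      |(β₁ z ν' - β₂ z ν') - (β₁ z ν - β₂ z ν)| ≤ D₂ * |ν' - ν| :=
    fun ν' hν' z hz =>
      mvt_abs' (g := fun u => β₁ z u - β₂ z u) (g' := fun u => bν₁ z u - bν₂ z u)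
        (fun u => (hb₁d z u).sub (hb₂d z u))
        (fun u hu => hD₂ z hz u (hsub ν' hν' hu))
  -- difference quotient bound for k₁
  have hq₁ : ∀ ν' ∈ Icc (-Bν) Bν, ∀ t ∈ Icc (0:ℝ) 1,
      |k₁ t ν' - k₁ t ν| ≤ Cu * |ν' - ν| := by
    intro ν' hν'
    have key := gron' (f := fun t => k₁ t ν' - k₁ t ν) ((ck₁ ν').sub (ck₁ ν))
      (a := Bβν * (1 + Bk) * |ν' - ν|) (by positivity) hBβ ?_
    · intro t ht
      calc |k₁ t ν' - k₁ t ν| ≤ Bβν * (1 + Bk) * |ν' - ν| * Real.exp Bβ := key t ht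
        _ = Cu * |ν' - ν| := by rw [hCu, hE]; ring
    intro t ht
    beta_reduce
    have hGsub : (∫ y in (0:ℝ)..t, β₁ (t - y) ν' * k₁ y ν')
        - (∫ y in (0:ℝ)..t, β₁ (t - y) ν * k₁ y ν)
        = ∫ y in (0:ℝ)..t, (β₁ (t - y) ν' * k₁ y ν' - β₁ (t - y) ν * k₁ y ν) :=
      (intervalIntegral.integral_sub (((cβ₁ t ν').mul (ck₁ ν')).intervalIntegrable 0 t)
        (((cβ₁ t ν).mul (ck₁ ν)).intervalIntegrable 0 t)).symm
    have heq : k₁ t ν' - k₁ t ν = -(β₁ t ν' - β₁ t ν)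
        + ∫ y in (0:ℝ)..t, (β₁ (t - y) ν' * k₁ y ν' - β₁ (t - y) ν * k₁ y ν) := by
      rw [hk₁eq t ht ν', hk₁eq t ht ν, ← hGsub]; ring
    rw [heq]
    refine (abs_add_le _ _).trans ?_
    have h1 : |β₁ t ν' - β₁ t ν| ≤ Bβν * |ν' - ν| := hm1 ν' hν' t ht
    have h2 := int_bd' (G := fun y => β₁ (t - y) ν' * k₁ y ν' - β₁ (t - y) ν * k₁ y ν)
      (f := fun s => k₁ s ν' - k₁ s ν) (c := Bβν * |ν' - ν| * Bk) (b := Bβ)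
      (((cβ₁ t ν').mul (ck₁ ν')).sub ((cβ₁ t ν).mul (ck₁ ν))) ((ck₁ ν').sub (ck₁ ν))
      ht (by positivity) hBβ.le ?_
    · beta_reduce at h2
      simpa using by linarith [h1, h2, abs_sub_comm (β₁ t ν') (β₁ t ν)]
    intro y hy
    beta_reduce
    have hy1 := memy ht hy
    have hty := memxy ht hy
    have hsplit : β₁ (t - y) ν' * k₁ y ν' - β₁ (t - y) ν * k₁ y ν
        = (β₁ (t - y) ν' - β₁ (t - y) ν) * k₁ y ν'
          + β₁ (t - y) ν * (k₁ y ν' - k₁ y ν) := by ring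
    rw [hsplit]
    refine (abs_add_le _ _).trans ?_
    have t1 := absmul' (hm1 ν' hν' _ hty) (hk₁b ν' hν' y hy1)
    have t2 : |β₁ (t - y) ν * (k₁ y ν' - k₁ y ν)| ≤ Bβ * |k₁ y ν' - k₁ y ν| := by
      rw [abs_mul]
      exact mul_le_mul_of_nonneg_right ((hbdd _ hty ν hν).1) (abs_nonneg _)
    linarith
  -- main estimate on the difference of difference quotients
  have hw : ∀ ν' ∈ Icc (-Bν) Bν, ∀ t ∈ Icc (0:ℝ) 1,
      |(k₁ t ν' - k₂ t ν') - (k₁ t ν - k₂ t ν)|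
        ≤ (D₂ + D₂ * Bk + Bβν * Dk + D₁ * Cu) * |ν' - ν| * E := by
    intro ν' hν'
    have key := gron' (f := fun t => (k₁ t ν' - k₂ t ν') - (k₁ t ν - k₂ t ν))
      (((ck₁ ν').sub (ck₂ ν')).sub ((ck₁ ν).sub (ck₂ ν)))
      (a := (D₂ + D₂ * Bk + Bβν * Dk + D₁ * Cu) * |ν' - ν|) (by positivity) hBβ ?_
    · intro t ht
      have := key t ht
      rw [← hE] at this
      exact this
    intro t ht
    beta_reduce
    have i1 : IntervalIntegrable (fun y => β₁ (t - y) ν' * k₁ y ν') MeasureTheory.volume 0 t := ((cβ₁ t ν').mul (ck₁ ν')).intervalIntegrable (μ := MeasureTheory.volume) (0:ℝ) t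
    have i2 : IntervalIntegrable (fun y => β₂ (t - y) ν' * k₂ y ν') MeasureTheory.volume 0 t := ((cβ₂ t ν').mul (ck₂ ν')).intervalIntegrable (μ := MeasureTheory.volume) (0:ℝ) t
    have i3 : IntervalIntegrable (fun y => β₁ (t - y) ν * k₁ y ν) MeasureTheory.volume 0 t := ((cβ₁ t ν).mul (ck₁ ν)).intervalIntegrable (μ := MeasureTheory.volume) (0:ℝ) t
    have i4 : IntervalIntegrable (fun y => β₂ (t - y) ν * k₂ y ν) MeasureTheory.volume 0 t := ((cβ₂ t ν).mul (ck₂ ν)).intervalIntegrable (μ := MeasureTheory.volume) (0:ℝ) t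
    have hGsub : (∫ y in (0:ℝ)..t, β₁ (t - y) ν' * k₁ y ν')
        - (∫ y in (0:ℝ)..t, β₂ (t - y) ν' * k₂ y ν')
        - ((∫ y in (0:ℝ)..t, β₁ (t - y) ν * k₁ y ν)
          - (∫ y in (0:ℝ)..t, β₂ (t - y) ν * k₂ y ν))
        = ∫ y in (0:ℝ)..t, (β₁ (t - y) ν' * k₁ y ν' - β₂ (t - y) ν' * k₂ y ν'
            - (β₁ (t - y) ν * k₁ y ν - β₂ (t - y) ν * k₂ y ν)) := by
      rw [← intervalIntegral.integral_sub i1 i2, ← intervalIntegral.integral_sub i3 i4,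
        ← intervalIntegral.integral_sub (i1.sub i2) (i3.sub i4)]
    have heq : (k₁ t ν' - k₂ t ν') - (k₁ t ν - k₂ t ν)
        = -((β₁ t ν' - β₂ t ν') - (β₁ t ν - β₂ t ν))
        + ∫ y in (0:ℝ)..t, (β₁ (t - y) ν' * k₁ y ν' - β₂ (t - y) ν' * k₂ y ν'
            - (β₁ (t - y) ν * k₁ y ν - β₂ (t - y) ν * k₂ y ν)) := by
      rw [hk₁eq t ht ν', hk₂eq t ht ν', hk₁eq t ht ν, hk₂eq t ht ν, ← hGsub]; ring
    rw [heq]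
    refine (abs_add_le _ _).trans ?_
    have h1 : |(β₁ t ν' - β₂ t ν') - (β₁ t ν - β₂ t ν)| ≤ D₂ * |ν' - ν| := hm3 ν' hν' t ht
    have h2 := int_bd' (G := fun y => β₁ (t - y) ν' * k₁ y ν' - β₂ (t - y) ν' * k₂ y ν'
        - (β₁ (t - y) ν * k₁ y ν - β₂ (t - y) ν * k₂ y ν))
      (f := fun s => (k₁ s ν' - k₂ s ν') - (k₁ s ν - k₂ s ν))
      (c := D₂ * |ν' - ν| * Bk + Bβν * |ν' - ν| * Dk + D₁ * (Cu * |ν' - ν|)) (b := Bβ)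
      ((((cβ₁ t ν').mul (ck₁ ν')).sub ((cβ₂ t ν').mul (ck₂ ν'))).sub
        (((cβ₁ t ν).mul (ck₁ ν)).sub ((cβ₂ t ν).mul (ck₂ ν))))
      (((ck₁ ν').sub (ck₂ ν')).sub ((ck₁ ν).sub (ck₂ ν)))
      ht (by positivity) hBβ.le ?_
    · beta_reduce at h2
      rw [abs_neg]
      linarith [h1, h2]
    intro y hy
    beta_reduce
    have hy1 := memy ht hy
    have hty := memxy ht hy
    have hsplit : β₁ (t - y) ν' * k₁ y ν' - β₂ (t - y) ν' * k₂ y ν'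
          - (β₁ (t - y) ν * k₁ y ν - β₂ (t - y) ν * k₂ y ν)
        = ((β₁ (t - y) ν' - β₂ (t - y) ν') - (β₁ (t - y) ν - β₂ (t - y) ν)) * k₁ y ν'
          + (β₂ (t - y) ν' - β₂ (t - y) ν) * (k₁ y ν' - k₂ y ν')
          + (β₁ (t - y) ν - β₂ (t - y) ν) * (k₁ y ν' - k₁ y ν)
          + β₂ (t - y) ν * ((k₁ y ν' - k₂ y ν') - (k₁ y ν - k₂ y ν)) := by ring
    rw [hsplit]
    refine le_trans (abs_add_le _ _) ?_
    refine le_trans (add_le_add_left (abs_add_three _ _ _) _) ?_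
    have t1 := absmul' (hm3 ν' hν' _ hty) (hk₁b ν' hν' y hy1)
    have t2 := absmul' (hm2 ν' hν' _ hty) (hkdiff ν' hν' y hy1)
    have t3 := absmul' (hD₁ _ hty ν hν) (hq₁ ν' hν' y hy1)
    have t4 : |β₂ (t - y) ν * ((k₁ y ν' - k₂ y ν') - (k₁ y ν - k₂ y ν))|
        ≤ Bβ * |(k₁ y ν' - k₂ y ν') - (k₁ y ν - k₂ y ν)| := by
      rw [abs_mul]
      exact mul_le_mul_of_nonneg_right ((hbdd _ hty ν hν).2.1) (abs_nonneg _)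
    linarith
  -- pass to the limit of difference quotients
  have hcoef : ∀ h : ℝ, 0 ≤ h →
      (D₂ + D₂ * Bk + Bβν * Dk + D₁ * Cu) * h * E
        ≤ (1 + Bk) * (1 + 2 * Bβν * E) * E * (D₁ + D₂) * h := by
    intro h h0
    have e0 : (0:ℝ) < E := lt_of_lt_of_le one_pos hE1
    have hring : (1 + Bk) * (1 + 2 * Bβν * E) * E * (D₁ + D₂)
        - (D₂ + D₂ * Bk + Bβν * (D₁ * (1 + Bk) * E) + D₁ * (Bβν * (1 + Bk) * E)) * E
        = E * (1 + Bk) * (D₁ + 2 * Bβν * E * D₂) := by ring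
    have hpos : 0 ≤ E * (1 + Bk) * (D₁ + 2 * Bβν * E * D₂) := by positivity
    have hco : (D₂ + D₂ * Bk + Bβν * Dk + D₁ * Cu) * E
        ≤ (1 + Bk) * (1 + 2 * Bβν * E) * E * (D₁ + D₂) := by
      rw [hDk, hCu]; linarith [hring, hpos]
    calc (D₂ + D₂ * Bk + Bβν * Dk + D₁ * Cu) * h * E
        = (D₂ + D₂ * Bk + Bβν * Dk + D₁ * Cu) * E * h := by ring
      _ ≤ (1 + Bk) * (1 + 2 * Bβν * E) * E * (D₁ + D₂) * h :=
          mul_le_mul_of_nonneg_right hco h0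
  have hWb : ∀ ν' ∈ Icc (-Bν) Bν, ν' ≠ ν →
      |slope (fun u => k₁ x u - k₂ x u) ν ν'|
        ≤ (1 + Bk) * (1 + 2 * Bβν * E) * E * (D₁ + D₂) := by
    intro ν' hν' hne
    have hb := (hw ν' hν' x hx).trans (hcoef |ν' - ν| (abs_nonneg _))
    rw [slope_def_field]
    beta_reduce
    rw [abs_div]
    rw [div_le_iff₀ (abs_pos.mpr (sub_ne_zero.mpr hne))]
    exact hb
  have hder : HasDerivAt (fun u => k₁ x u - k₂ x u) (kν₁ x ν - kν₂ x ν) ν :=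
    (hkd₁ x hx ν).sub (hkd₂ x hx ν)
  have hsl := hasDerivAt_iff_tendsto_slope.mp hder
  rcases lt_or_ge ν Bν with hc | hc
  · have hmem : Ioc ν Bν ∈ nhdsWithin ν (Ioi ν) :=
      Ioc_mem_nhdsGT_of_mem ⟨le_refl ν, hc⟩
    have hmono : nhdsWithin ν (Ioi ν) ≤ nhdsWithin ν {ν}ᶜ :=
      nhdsWithin_mono ν (fun u hu => mem_compl_singleton_iff.mpr (ne_of_gt hu))
    have htend := (hsl.mono_left hmono).abs
    refine le_of_tendsto htend ?_
    filter_upwards [hmem] with ν' hν'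
    exact hWb ν' ⟨le_trans hν.1 (le_of_lt hν'.1), hν'.2⟩ (ne_of_gt hν'.1)
  · have hlt : -Bν < ν := by linarith
    have hmem : Ico (-Bν) ν ∈ nhdsWithin ν (Iio ν) :=
      Ico_mem_nhdsLT_of_mem ⟨hlt, le_refl ν⟩
    have hmono : nhdsWithin ν (Iio ν) ≤ nhdsWithin ν {ν}ᶜ :=
      nhdsWithin_mono ν (fun u hu => mem_compl_singleton_iff.mpr (ne_of_lt hu))
    have htend := (hsl.mono_left hmono).abs
    refine le_of_tendsto htend ?_
    filter_upwards [hmem] with ν' hν'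
    exact hWb ν' ⟨hν'.1, le_trans (le_of_lt hν'.2) hν.2⟩ (ne_of_lt hν'.2)
end
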